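/- arXiv:2512.23268 — 4 statements merged into one kernel-verified Lean document; each statement's English description precedes it below -/
import Mathlib

section
/- For every x in a compact Riemannian manifold M, the negative gradient flow φ_t(x) of a Morse function f has a limit as t → +∞, and this limit is a critical point of f. -/
open Filter Topology

private lemma grad_contDiff_aux {E : Type*} [NormedAddCommGroup E] [InnerProductSpace ℝ E]
    [FiniteDimensional ℝ E] (f : E → ℝ) (hf : ContDiff ℝ (⊤ : ℕ∞) f) :
    ContDiff ℝ (⊤ : ℕ∞) (gradient f) := by
  obtain ⟨L, hL⟩ : ∃ L : (E →L[ℝ] ℝ) →ₗ[ℝ] E,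
      ∀ ψ, L ψ = (InnerProductSpace.toDual ℝ E).symm ψ := by
    refine ⟨{ toFun := fun ψ => (InnerProductSpace.toDual ℝ E).symm ψ
              map_add' := fun a b => by simp
              map_smul' := fun c a => by simp }, fun _ => rfl⟩
  have hgrad : gradient f = fun y => L (fderiv ℝ f y) := by
    funext y; rw [hL]; rfl
  rw [hgrad]
  exact L.toContinuousLinearMap.contDiff.comp (hf.fderiv_right (by simp))

set_option maxHeartbeats 2000000 in
/-- For every `x` in a compact manifold `M` (modelled as a compact flow-invariant
subset of an inner product space), the negative gradient flow of a Morse function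
`f` starting at `x` converges as `t → +∞`, and the limit is a critical point. -/
theorem stmt3
    {E : Type*} [NormedAddCommGroup E] [InnerProductSpace ℝ E] [FiniteDimensional ℝ E]
    (f : E → ℝ) (hf : ContDiff ℝ (⊤ : ℕ∞) f)
    (hMorse : ∀ y : E, gradient f y = 0 → Function.Bijective (fderiv ℝ (gradient f) y))
    (M : Set E) (hM : IsCompact M)
    (φ : ℝ → E → E)
    (hφ0 : ∀ x, φ 0 x = x)
    (hφ : ∀ x t, HasDerivAt (fun s => φ s x) (-(gradient f (φ t x))) t)
    (hinv : ∀ x ∈ M, ∀ t : ℝ, φ t x ∈ M)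
    (x : E) (hx : x ∈ M) :
    ∃ p ∈ M, gradient f p = 0 ∧ Tendsto (fun t => φ t x) atTop (𝓝 p) := by
  classical
  set G := gradient f with hGdef
  have hGc : ContDiff ℝ (⊤ : ℕ∞) G := grad_contDiff_aux f hf
  have hGcont : Continuous G := hGc.continuous
  set γ : ℝ → E := fun t => φ t x with hγdef
  have hγM : ∀ t, γ t ∈ M := fun t => hinv x hx t
  have hγd : ∀ t, HasDerivAt γ (-(G (γ t))) t := fun t => hφ x t
  have hγcont : Continuous γ := continuous_iff_continuousAt.2 fun t => (hγd t).continuousAt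
  set g : ℝ → ℝ := fun t => f (γ t) with hgdef
  have hfd : Differentiable ℝ f := hf.differentiable (by simp)
  have hgd : ∀ t, HasDerivAt g (-‖G (γ t)‖ ^ 2) t := by
    intro t
    have h1 : HasFDerivAt f (InnerProductSpace.toDual ℝ E (G (γ t))) (γ t) :=
      ((hfd (γ t)).hasGradientAt).hasFDerivAt
    have h2 := h1.comp_hasDerivAt t (hγd t)
    simpa [Function.comp_def, InnerProductSpace.toDual_apply_apply, inner_neg_right,
      real_inner_self_eq_norm_sq] using h2
  have hganti : Antitone g :=
    antitone_of_deriv_nonpos (fun t => (hgd t).differentiableAt)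
      (fun t => by rw [(hgd t).deriv]; exact neg_nonpos.2 (by positivity))
  -- f bounded below on M
  obtain ⟨y0m, _, hy0m⟩ := hM.exists_isMinOn ⟨x, hx⟩ hf.continuous.continuousOn
  set m : ℝ := f y0m with hmdef
  have hm : ∀ y ∈ M, m ≤ f y := fun y hy => hy0m hy
  have hbdd : BddBelow (Set.range g) := ⟨m, by rintro _ ⟨t, rfl⟩; exact hm _ (hγM t)⟩
  set c : ℝ := ⨅ t, g t with hcdef
  have hgc : Tendsto g atTop (𝓝 c) := tendsto_atTop_ciInf hganti hbdd
  have hcle : ∀ t, c ≤ g t := fun t => ciInf_le hbdd t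
  -- speed bound
  obtain ⟨K, hK⟩ := hM.exists_bound_of_continuousOn hGcont.continuousOn
  set K' : ℝ := max K 1 with hK'def
  have hK0 : 0 < K' := lt_of_lt_of_le one_pos (le_max_right _ _)
  have hK' : ∀ t : ℝ, ‖G (γ t)‖ ≤ K' := fun t => (hK _ (hγM t)).trans (le_max_left _ _)
  have hspeed : ∀ a b : ℝ, a ≤ b → dist (γ b) (γ a) ≤ K' * (b - a) := by
    intro a b hab
    have h := Convex.norm_image_sub_le_of_norm_hasDerivWithin_le
      (f := γ) (f' := fun u => -(G (γ u))) (s := Set.Icc a b)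
      (fun u _ => (hγd u).hasDerivWithinAt)
      (fun u _ => by simpa using hK' u) (convex_Icc a b)
      (Set.left_mem_Icc.2 hab) (Set.right_mem_Icc.2 hab)
    rw [dist_eq_norm]
    calc ‖γ b - γ a‖ ≤ K' * ‖b - a‖ := h
    _ = K' * (b - a) := by
        rw [Real.norm_eq_abs, abs_of_nonneg (sub_nonneg.2 hab)]
  -- key decrease estimate
  have key : ∀ a b δ : ℝ, a ≤ b → 0 ≤ δ → (∀ u ∈ Set.Ioo a b, δ ≤ ‖G (γ u)‖) →
      g b + δ ^ 2 * (b - a) ≤ g a := by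
    intro a b δ hab hδ0 hδ
    have hder : ∀ u : ℝ, HasDerivAt (fun y => g y + δ ^ 2 * y) (-‖G (γ u)‖ ^ 2 + δ ^ 2) u := by
      intro u
      exact ((hgd u).add ((hasDerivAt_id u).const_mul (δ ^ 2))).congr_deriv (by simp)
    have h1 : AntitoneOn (fun u => g u + δ ^ 2 * u) (Set.Icc a b) := by
      apply antitoneOn_of_deriv_nonpos (convex_Icc a b)
      · exact (Continuous.add (hf.continuous.comp hγcont)
          (continuous_const.mul continuous_id)).continuousOn
      · intro u _; exact (hder u).differentiableAt.differentiableWithinAt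
      · intro u hu
        rw [interior_Icc] at hu
        rw [(hder u).deriv]
        have h2 := hδ u hu
        nlinarith [pow_le_pow_left₀ hδ0 h2 2]
    have h3 := h1 (Set.left_mem_Icc.2 hab) (Set.right_mem_Icc.2 hab) hab
    dsimp only at h3
    have h4 : δ ^ 2 * (b - a) = δ ^ 2 * b - δ ^ 2 * a := by ring
    linarith
  -- every cluster point of the trajectory is critical
  have crit : ∀ p : E, (∀ ε > (0:ℝ), ∀ T : ℝ, ∃ t, T ≤ t ∧ dist (γ t) p < ε) → G p = 0 := by
    intro p hp
    by_contra hGp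
    have hnorm : 0 < ‖G p‖ := norm_pos_iff.2 hGp
    set δ : ℝ := ‖G p‖ / 2 with hδdef
    have hδ0 : 0 < δ := half_pos hnorm
    obtain ⟨r, hr0, hball⟩ : ∃ r > (0:ℝ), ∀ y, dist y p ≤ r → δ ≤ ‖G y‖ := by
      have h1 : ∀ᶠ y in 𝓝 p, δ < ‖G y‖ :=
        (hGcont.norm.continuousAt (x := p)).eventually_const_lt (half_lt_self hnorm)
      obtain ⟨ε, hε0, hε⟩ := Metric.eventually_nhds_iff.1 h1
      exact ⟨ε / 2, half_pos hε0, fun y hy =>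
        (hε (lt_of_le_of_lt hy (half_lt_self hε0))).le⟩
    -- the trajectory leaves the ball after every time
    have leave : ∀ s : ℝ, ∃ u, s ≤ u ∧ r < dist (γ u) p := by
      intro s
      by_contra h
      push_neg at h
      set b : ℝ := s + (g s - m) / δ ^ 2 + 1 with hbdef
      have hgs : m ≤ g s := hm _ (hγM s)
      have hab : s ≤ b := by
        have : 0 ≤ (g s - m) / δ ^ 2 := div_nonneg (by linarith) (by positivity)
        simp only [hbdef]; linarith
      have hkey := key s b δ hab hδ0.le (fun u hu => hball _ (h u hu.1.le))
      have hmb : m ≤ g b := hm _ (hγM b)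
      have hδ2 : (0:ℝ) < δ ^ 2 := by positivity
      have heq : δ ^ 2 * (b - s) = (g s - m) + δ ^ 2 := by
        rw [hbdef]
        have hne := hδ2.ne'
        have h' : δ ^ 2 * ((g s - m) / δ ^ 2) = g s - m := by field_simp
        linear_combination h'
      linarith
    set ε : ℝ := δ ^ 2 * (r / 2) / K' with hεdef
    have hε0 : 0 < ε := by positivity
    obtain ⟨T, hT⟩ := (eventually_atTop.1 (hgc.eventually (gt_mem_nhds
      (by linarith : c < c + ε))))
    obtain ⟨s, hsT, hsr⟩ := hp (r / 2) (by positivity) T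
    set S : Set ℝ := {u | s ≤ u ∧ r ≤ dist (γ u) p} with hSdef
    have hSne : S.Nonempty := by
      obtain ⟨u, hu1, hu2⟩ := leave s; exact ⟨u, hu1, hu2.le⟩
    have hSclosed : IsClosed S :=
      (isClosed_le continuous_const continuous_id).inter
        (isClosed_le continuous_const (hγcont.dist continuous_const))
    have hSbdd : BddBelow S := ⟨s, fun u hu => hu.1⟩
    set t : ℝ := sInf S with htdef
    have htS : t ∈ S := hSclosed.csInf_mem hSne hSbdd
    have hst : s < t := by
      rcases lt_or_eq_of_le htS.1 with h | h
      · exact h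
      · exfalso; rw [← h] at htS; linarith [htS.2, hsr]
    have hmid : ∀ u ∈ Set.Ioo s t, dist (γ u) p ≤ r := by
      intro u hu
      by_contra h
      push_neg at h
      exact absurd (csInf_le hSbdd ⟨hu.1.le, h.le⟩) (not_le.2 hu.2)
    have hkey := key s t δ hst.le hδ0.le (fun u hu => hball _ (hmid u hu))
    have h1 : r ≤ dist (γ t) p := htS.2
    have h3 : r / 2 ≤ dist (γ t) (γ s) := by
      have htri := dist_triangle (γ t) (γ s) p
      have := dist_comm (γ s) p
      linarith [hsr]
    have h4 := hspeed s t hst.le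
    have h5 : r / 2 ≤ K' * (t - s) := le_trans h3 h4
    have h6 : ε ≤ δ ^ 2 * (t - s) := by
      rw [hεdef, div_le_iff₀ hK0]
      nlinarith [sq_nonneg δ]
    linarith [hcle t, hT s hsT, hkey]
  -- isolation of critical points
  have isol : ∀ p : E, G p = 0 → ∃ ρ > (0:ℝ), ∀ y, dist y p ≤ ρ → G y = 0 → y = p := by
    intro p hp
    have hbij : Function.Bijective ((fderiv ℝ G p : E →ₗ[ℝ] E)) := hMorse p hp
    set L : E ≃ₗ[ℝ] E := LinearEquiv.ofBijective _ hbij with hLdef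
    set e : E ≃L[ℝ] E := L.toContinuousLinearEquiv with hedef
    have hcoe : (e : E →L[ℝ] E) = fderiv ℝ G p := by ext v; rfl
    have hstrict : HasStrictFDerivAt G (e : E →L[ℝ] E) p := by
      rw [hcoe]; exact (hGc.contDiffAt).hasStrictFDerivAt (by simp)
    set Φ := HasStrictFDerivAt.toOpenPartialHomeomorph G hstrict with hΦdef
    have hmemsrc : p ∈ Φ.source := HasStrictFDerivAt.mem_toOpenPartialHomeomorph_source hstrict
    have hsrc : Φ.source ∈ 𝓝 p := Φ.open_source.mem_nhds hmemsrc
    obtain ⟨ρ, hρ0, hρ⟩ := Metric.nhds_basis_closedBall.mem_iff.1 hsrc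
    refine ⟨ρ, hρ0, fun y hy hGy => ?_⟩
    have h1 : y ∈ Φ.source := hρ (Metric.mem_closedBall.2 hy)
    apply Φ.injOn h1 hmemsrc
    have hΦcoe : (Φ : E → E) = G := HasStrictFDerivAt.toOpenPartialHomeomorph_coe hstrict
    show Φ y = Φ p
    rw [show (Φ y : E) = G y from congrFun hΦcoe y,
      show (Φ p : E) = G p from congrFun hΦcoe p, hGy, hp]
  -- existence of a cluster point
  obtain ⟨p, hpM, ψ, hψmono, hψlim⟩ := hM.tendsto_subseq (x := fun n : ℕ => γ n)
    (fun n => hγM n)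
  have hψtop : Tendsto (fun n => ((ψ n : ℕ) : ℝ)) atTop atTop :=
    tendsto_natCast_atTop_atTop.comp hψmono.tendsto_atTop
  have hfreq : ∀ ε > (0:ℝ), ∀ T : ℝ, ∃ t, T ≤ t ∧ dist (γ t) p < ε := by
    intro ε hε T
    have h1 : ∀ᶠ n in atTop, dist (γ (ψ n)) p < ε := by
      have := Metric.tendsto_nhds.1 hψlim ε hε
      exact this
    have h2 : ∀ᶠ n in atTop, T ≤ ((ψ n : ℕ) : ℝ) := hψtop.eventually_ge_atTop T
    obtain ⟨n, hn1, hn2⟩ := (h1.and h2).exists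
    exact ⟨(ψ n : ℕ), hn2, hn1⟩
  have hpc : G p = 0 := crit p hfreq
  obtain ⟨ρ, hρ0, hρ⟩ := isol p hpc
  refine ⟨p, hpM, hpc, ?_⟩
  rw [Metric.tendsto_nhds]
  by_contra hcon
  push_neg at hcon
  obtain ⟨ε, hε0, hεfreq⟩ := hcon
  have hfar : ∀ T : ℝ, ∃ t, T ≤ t ∧ ε ≤ dist (γ t) p := by
    intro T
    obtain ⟨t, ht, hdist⟩ := Filter.frequently_atTop.1 hεfreq T
    exact ⟨t, ht, hdist⟩
  set r : ℝ := min ε ρ / 3 with hrdef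
  have hr0 : 0 < r := by
    have := lt_min hε0 hρ0
    positivity
  have h3rρ : 3 * r ≤ ρ := by
    have := min_le_right ε ρ; rw [hrdef]; linarith
  have h3rε : 3 * r ≤ ε := by
    have := min_le_left ε ρ; rw [hrdef]; linarith
  set A : Set E := M ∩ {y | r ≤ dist y p ∧ dist y p ≤ 2 * r} with hAdef
  have hAclosed : IsClosed {y : E | r ≤ dist y p ∧ dist y p ≤ 2 * r} :=
    (isClosed_le continuous_const (continuous_id.dist continuous_const)).inter
      (isClosed_le (continuous_id.dist continuous_const) continuous_const)
  have hAcompact : IsCompact A := hM.inter_right hAclosed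
  -- A is nonempty (intermediate value theorem)
  obtain ⟨s0, _, hs0⟩ := hfreq r hr0 0
  obtain ⟨t0, ht0s, ht0⟩ := hfar s0
  have hAne : A.Nonempty := by
    have hcont' : ContinuousOn (fun u => dist (γ u) p) (Set.Icc s0 t0) :=
      (hγcont.dist continuous_const).continuousOn
    have himg := intermediate_value_Icc ht0s hcont'
    have hmem : 2 * r ∈ Set.Icc (dist (γ s0) p) (dist (γ t0) p) :=
      ⟨by linarith, by linarith⟩
    obtain ⟨u, _, hu⟩ := himg hmem
    simp only at hu
    exact ⟨γ u, hγM u, by rw [hu]; linarith, le_of_eq hu⟩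
  obtain ⟨ya, hyaA, hyamin⟩ := hAcompact.exists_isMinOn hAne hGcont.norm.continuousOn
  set δ : ℝ := ‖G ya‖ with hδdef
  have hδ0 : 0 < δ := by
    rw [hδdef, norm_pos_iff]
    intro h0
    have hya_p : ya = p := hρ ya (by linarith [hyaA.2.1, hyaA.2.2]) h0
    have h2 : r ≤ dist ya p := hyaA.2.1
    rw [hya_p, dist_self] at h2
    linarith
  have hA : ∀ y ∈ A, δ ≤ ‖G y‖ := fun y hy => hyamin hy
  set ε' : ℝ := δ ^ 2 * r / K' with hε'def
  have hε'0 : 0 < ε' := by positivity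
  obtain ⟨T, hT⟩ := eventually_atTop.1 (hgc.eventually (gt_mem_nhds
    (by linarith : c < c + ε')))
  obtain ⟨s, hsT, hsnear⟩ := hfreq r hr0 T
  -- first time t ≥ s at distance 2r
  set S1 : Set ℝ := {u | s ≤ u ∧ 2 * r ≤ dist (γ u) p} with hS1def
  have hS1ne : S1.Nonempty := by
    obtain ⟨t1, ht1, hd1⟩ := hfar s
    exact ⟨t1, ht1, by linarith⟩
  have hS1closed : IsClosed S1 :=
    (isClosed_le continuous_const continuous_id).inter
      (isClosed_le continuous_const (hγcont.dist continuous_const))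
  have hS1bdd : BddBelow S1 := ⟨s, fun u hu => hu.1⟩
  set t : ℝ := sInf S1 with htdef
  have htS1 : t ∈ S1 := hS1closed.csInf_mem hS1ne hS1bdd
  have hst : s < t := by
    rcases lt_or_eq_of_le htS1.1 with h | h
    · exact h
    · exfalso; rw [← h] at htS1; linarith [htS1.2]
  -- last time before t within distance r
  set S2 : Set ℝ := {u | s ≤ u ∧ u ≤ t ∧ dist (γ u) p ≤ r} with hS2def
  have hS2ne : S2.Nonempty := ⟨s, le_refl s, hst.le, hsnear.le⟩
  have hS2closed : IsClosed S2 :=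
    (isClosed_le continuous_const continuous_id).inter
      ((isClosed_le continuous_id continuous_const).inter
        (isClosed_le (hγcont.dist continuous_const) continuous_const))
  have hS2bdd : BddAbove S2 := ⟨t, fun u hu => hu.2.1⟩
  set s' : ℝ := sSup S2 with hs'def
  have hs'S2 : s' ∈ S2 := hS2closed.csSup_mem hS2ne hS2bdd
  have hs't : s' < t := by
    rcases lt_or_eq_of_le hs'S2.2.1 with h | h
    · exact h
    · exfalso; rw [h] at hs'S2; linarith [hs'S2.2.2, htS1.2]
  have hann : ∀ u ∈ Set.Ioo s' t, γ u ∈ A := by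
    intro u hu
    have hu1 : s ≤ u := le_trans hs'S2.1 hu.1.le
    have hur : r ≤ dist (γ u) p := by
      by_contra h
      push_neg at h
      exact absurd (le_csSup hS2bdd ⟨hu1, hu.2.le, h.le⟩) (not_le.2 hu.1)
    have hu2r : dist (γ u) p ≤ 2 * r := by
      by_contra h
      push_neg at h
      exact absurd (csInf_le hS1bdd ⟨hu1, h.le⟩) (not_le.2 hu.2)
    exact ⟨hγM u, hur, hu2r⟩
  have hkey := key s' t δ hs't.le hδ0.le (fun u hu => hA _ (hann u hu))
  have h1 : 2 * r ≤ dist (γ t) p := htS1.2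
  have h3 : r ≤ dist (γ t) (γ s') := by
    have htri := dist_triangle (γ t) (γ s') p
    have hcm := dist_comm (γ s') p
    linarith [hs'S2.2.2]
  have h4 := hspeed s' t hs't.le
  have h5 : r ≤ K' * (t - s') := le_trans h3 h4
  have h6 : ε' ≤ δ ^ 2 * (t - s') := by
    rw [hε'def, div_le_iff₀ hK0]
    nlinarith [sq_nonneg δ]
  have h7 : g s' ≤ g s := hganti hs'S2.1
  linarith [hcle t, hT s hsT, hkey]
end

section
/- Every point in the closure of the stable manifold W^s(q) of a local minimum q of a Morse function lies on a piecewise flow line of the negative gradient flow descending to q; in particular, if p ∈ closure(W^s(q)) is noncritical, then the forward flow from p limits to a critical point lying in closure(W^s(q)). -/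
open Filter Topology


open Filter Topology Set InnerProductSpace

section
variable {E : Type*} [NormedAddCommGroup E] [InnerProductSpace ℝ E] [FiniteDimensional ℝ E]

lemma grad_smooth (f : E → ℝ) (hf : ContDiff ℝ (⊤ : ℕ∞) f) : ContDiff ℝ (⊤ : ℕ∞) (gradient f) := by
  have h1 : ContDiff ℝ (⊤ : ℕ∞) (fderiv ℝ f) := hf.fderiv_right (by simp)
  have : gradient f = fun x => (toDual ℝ E).symm (fderiv ℝ f x) := rfl
  rw [this]
  exact (toDual ℝ E).symm.toContinuousLinearEquiv.toContinuousLinearMap.contDiff.comp h1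

lemma inner_grad (f : E → ℝ) (x v : E) (hd : DifferentiableAt ℝ f x) :
    ⟪gradient f x, v⟫_ℝ = fderiv ℝ f x v := by
  have : toDual ℝ E (gradient f x) = fderiv ℝ f x := (toDual ℝ E).apply_symm_apply _
  rw [← this]; rfl

lemma f_deriv_along (f : E → ℝ) (hf : ContDiff ℝ (⊤ : ℕ∞) f) (φ : ℝ → E → E)
    (hφ : ∀ x t, HasDerivAt (fun s => φ s x) (-(gradient f (φ t x))) t) (x : E) (t : ℝ) :
    HasDerivAt (fun s => f (φ s x)) (-‖gradient f (φ t x)‖^2) t := by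
  have hfd := (hf.differentiable (by simp) (φ t x)).hasFDerivAt
  have := hfd.comp_hasDerivAt t (hφ x t)
  refine this.congr_deriv ?_
  rw [← inner_grad f _ _ (hf.differentiable (by simp) _)]
  rw [inner_neg_right, real_inner_self_eq_norm_sq]

end

section
variable {E : Type*} [NormedAddCommGroup E] [InnerProductSpace ℝ E] [FiniteDimensional ℝ E]

lemma f_antitone (f : E → ℝ) (hf : ContDiff ℝ (⊤ : ℕ∞) f) (φ : ℝ → E → E)
    (hφ : ∀ x t, HasDerivAt (fun s => φ s x) (-(gradient f (φ t x))) t) (x : E) :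
    Antitone (fun t => f (φ t x)) := by
  apply antitone_of_deriv_nonpos
  · exact fun t => (f_deriv_along f hf φ hφ x t).differentiableAt
  · intro t
    rw [(f_deriv_along f hf φ hφ x t).deriv]
    exact neg_nonpos.2 (pow_two_nonneg _)

lemma lipneg {K : NNReal} {g : E → E} {s : Set E} (h : LipschitzOnWith K g s) :
    LipschitzOnWith K (fun y => -(g y)) s := fun x hx y hy => by
  simpa [edist_neg_neg] using h hx hy

lemma crit_fixed (f : E → ℝ) (hf : ContDiff ℝ (⊤ : ℕ∞) f) (φ : ℝ → E → E)
    (hφ0 : ∀ x, φ 0 x = x)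
    (hφ : ∀ x t, HasDerivAt (fun s => φ s x) (-(gradient f (φ t x))) t)
    (hgrp : ∀ s t : ℝ, ∀ x : E, φ t (φ s x) = φ (t + s) x)
    (c : E) (hc : gradient f c = 0) (t : ℝ) : φ t c = c := by
  -- local Lipschitz bound for the gradient near c
  obtain ⟨K, s, hs, hK⟩ := (((grad_smooth f hf).contDiffAt (x := c)).of_le (by simp)).exists_lipschitzOnWith
  obtain ⟨r, hr, hball⟩ := Metric.mem_nhds_iff.1 hs
  -- continuity of the flow of c at time 0
  have hcont0 : ContinuousAt (fun s => φ s c) 0 := (hφ c 0).continuousAt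
  have : ∀ᶠ u in 𝓝 (0:ℝ), φ u c ∈ Metric.ball c r := by
    apply hcont0
    simp only [hφ0]
    exact Metric.ball_mem_nhds c hr
  obtain ⟨ε, hε, hε2⟩ := Metric.eventually_nhds_iff.1 this
  set ε' := ε/2 with hε'
  have hε'pos : 0 < ε' := by positivity
  have hball' : ∀ u ∈ Set.Icc (-ε') ε', φ u c ∈ Metric.ball c r := by
    intro u hu
    apply hε2
    rw [Real.dist_eq, sub_zero]
    have := abs_le.2 ⟨hu.1, hu.2⟩
    linarith [abs_le.2 ⟨hu.1, hu.2⟩]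
  -- local uniqueness: φ u c = c for |u| ≤ ε'
  have hball'' : ∀ u ∈ Set.Ioo (-ε' - 1) (ε' + 1), u ∈ Set.Icc (-ε') ε' →
      φ u c ∈ Metric.ball c r := fun u _ hu => hball' u hu
  have key : ∀ u ∈ Set.Icc (-ε') ε', φ u c = c := by
    have := ODE_solution_unique_of_mem_Icc
      (v := fun _ y => -(gradient f y)) (s := fun _ => Metric.ball c r)
      (K := K) (f := fun u => φ u c) (g := fun _ => c) (t₀ := (0:ℝ))
      (a := -ε') (b := ε')
      (fun _ _ => lipneg (hK.mono hball))
      (by constructor <;> simpa using hε'pos)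
      (Continuous.continuousOn
        (continuous_iff_continuousAt.2 fun u => (hφ c u).continuousAt))
      (fun u _ => hφ c u)
      (fun u hu => hball' u (Set.mem_Icc.2 ⟨hu.1.le, hu.2.le⟩))
      continuousOn_const
      (fun u _ => by simpa [hc] using (hasDerivAt_const u c))
      (fun u _ => Metric.mem_ball_self hr)
      (by simp [hφ0])
    exact fun u hu => this hu
  have hadd : ∀ a b : ℝ, φ a c = c → φ b c = c → φ (a + b) c = c := by
    intro a b ha hb
    rw [← hgrp b a c, hb, ha]
  obtain ⟨n, hn⟩ := exists_nat_gt (|t| / ε')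
  have hnpos : 0 < (n:ℝ) + 1 := by positivity
  have hsmall : φ (t / (n+1)) c = c := by
    apply key
    rw [Set.mem_Icc, ← abs_le, abs_div]
    rw [abs_of_pos hnpos, div_le_iff₀ hnpos]
    rw [div_lt_iff₀ hε'pos] at hn
    nlinarith [hε'pos.le]
  have hiter : ∀ m : ℕ, φ ((m : ℝ) * (t / (n+1))) c = c := by
    intro m
    induction m with
    | zero => simpa using hφ0 c
    | succ k ih =>
      have h2 := hadd _ _ ih hsmall
      rw [← h2]
      congr 1
      push_cast
      ring
  have h3 := hiter (n+1)
  rw [show ((n+1 : ℕ) : ℝ) * (t / ((n:ℝ)+1)) = t by push_cast; field_simp] at h3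
  exact h3
end

section
variable {E : Type*} [NormedAddCommGroup E] [InnerProductSpace ℝ E] [FiniteDimensional ℝ E]

lemma crit_isolated (f : E → ℝ) (hf : ContDiff ℝ (⊤ : ℕ∞) f)
    (hMorse : ∀ y : E, gradient f y = 0 → Function.Bijective (fderiv ℝ (gradient f) y))
    (c : E) (hc : gradient f c = 0) :
    ∃ r > 0, ∀ x ∈ Metric.closedBall c r, gradient f x = 0 → x = c := by
  have hg := grad_smooth f hf
  set D := (LinearEquiv.ofBijective (fderiv ℝ (gradient f) c).toLinearMap
      (hMorse c hc)).toContinuousLinearEquiv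
  have hD : HasStrictFDerivAt (gradient f) (D : E →L[ℝ] E) c := by
    have h1 : HasStrictFDerivAt (gradient f) (fderiv ℝ (gradient f) c) c :=
      hg.hasStrictFDerivAt (by simp)
    have h2 : (D : E →L[ℝ] E) = fderiv ℝ (gradient f) c := by
      ext v; rfl
    rw [h2]
    exact h1
  have hsrc := hD.mem_toOpenPartialHomeomorph_source
  have hinj := (hD.toOpenPartialHomeomorph (gradient f)).injOn
  obtain ⟨r, hr, hball⟩ := Metric.mem_nhds_iff.1
    ((hD.toOpenPartialHomeomorph (gradient f)).open_source.mem_nhds hsrc)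
  refine ⟨r/2, by positivity, fun x hx hx0 => ?_⟩
  apply hinj (hball ?_) (hball (Metric.mem_ball_self hr))
  · have : (hD.toOpenPartialHomeomorph (gradient f)) x = (hD.toOpenPartialHomeomorph (gradient f)) c := by
      show gradient f x = gradient f c
      rw [hx0, hc]
    exact this
  · have := Metric.mem_closedBall.1 hx
    exact Metric.mem_ball.2 (by linarith [hr])

lemma crit_finite (f : E → ℝ) (hf : ContDiff ℝ (⊤ : ℕ∞) f)
    (hMorse : ∀ y : E, gradient f y = 0 → Function.Bijective (fderiv ℝ (gradient f) y))
    (M : Set E) (hM : IsCompact M) : {x | x ∈ M ∧ gradient f x = 0}.Finite := by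
  by_contra hinf
  have hinf' : {x | x ∈ M ∧ gradient f x = 0}.Infinite := hinf
  obtain ⟨x, hxM, hx⟩ := hinf'.exists_accPt_of_subset_isCompact hM
    (fun y hy => hy.1)
  rw [accPt_iff_nhds] at hx
  -- x is in the closure of the critical set; the critical set is closed
  have hclosed : IsClosed {y : E | y ∈ M ∧ gradient f y = 0} :=
    IsClosed.inter hM.isClosed
      (isClosed_eq ((grad_smooth f hf).continuous) continuous_const)
  have hxK : x ∈ {y : E | y ∈ M ∧ gradient f y = 0} := by
    rw [← hclosed.closure_eq]
    rw [mem_closure_iff_nhds]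
    intro U hU
    obtain ⟨y, hy, -⟩ := hx U hU
    exact ⟨y, hy⟩
  obtain ⟨r, hr, hiso⟩ := crit_isolated f hf hMorse x hxK.2
  obtain ⟨y, hy, hyne⟩ := hx (Metric.closedBall x r) (Metric.closedBall_mem_nhds x hr)
  exact hyne (hiso y hy.1 hy.2.2)
end


open Filter Topology Set InnerProductSpace

section
variable {E : Type*} [NormedAddCommGroup E] [InnerProductSpace ℝ E] [FiniteDimensional ℝ E]

lemma exists_cluster {K : Set E} (hK : IsCompact K) {l : Filter ℝ} (hl : l.NeBot) {u : ℝ → E}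
    (h : ∀ᶠ t in l, u t ∈ K) : ∃ z ∈ K, MapClusterPt z l u := by
  haveI := hl
  exact hK.exists_mapClusterPt (Filter.le_principal_iff.2 h)

lemma cluster_mem_closed {S : Set E} (hS : IsClosed S) {l : Filter ℝ} {u : ℝ → E}
    {z : E} (h : ∀ᶠ t in l, u t ∈ S) (hz : MapClusterPt z l u) : z ∈ S := by
  have h1 : Filter.map u l ≤ 𝓟 S := Filter.le_principal_iff.2 h
  exact isClosed_iff_clusterPt.1 hS z (hz.clusterPt.mono h1)

lemma cluster_seq {u : ℝ → E} {z : E} (h : MapClusterPt z atTop u) :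
    ∃ t : ℕ → ℝ, Tendsto t atTop atTop ∧ Tendsto (fun n => u (t n)) atTop (𝓝 z) := by
  have hfreq := mapClusterPt_iff_frequently.1 h
  have hsel : ∀ n : ℕ, ∃ T : ℝ, T ≥ n ∧ dist (u T) z < 1/(n+1) := by
    intro n
    have := hfreq (Metric.ball z (1/(n+1))) (Metric.ball_mem_nhds z (by positivity))
    rw [Filter.frequently_atTop] at this
    obtain ⟨T, hT, hT2⟩ := this n
    exact ⟨T, hT, hT2⟩
  choose t ht1 ht2 using hsel
  refine ⟨t, ?_, ?_⟩
  · apply tendsto_atTop_mono ht1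
    exact tendsto_natCast_atTop_atTop
  · rw [tendsto_iff_dist_tendsto_zero]
    apply squeeze_zero (fun n => dist_nonneg) (fun n => (ht2 n).le)
    exact tendsto_one_div_add_atTop_nhds_zero_nat

lemma cluster_of_frequently {K : Set E} (hK : IsCompact K) {u : ℝ → E} {p : ℝ → Prop}
    (hp : ∃ᶠ t in atTop, p t) (hev : ∀ᶠ t in atTop, u t ∈ K) {S : Set E} (hS : IsClosed S)
    (hpS : ∀ t, p t → u t ∈ S) : ∃ v ∈ K, v ∈ S ∧ MapClusterPt v atTop u := by
  have hne : (atTop ⊓ 𝓟 {t : ℝ | p t}).NeBot := Filter.frequently_iff_neBot.1 hp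
  have hev' : ∀ᶠ t in atTop ⊓ 𝓟 {t : ℝ | p t}, u t ∈ K := hev.filter_mono inf_le_left
  obtain ⟨v, hvK, hv⟩ := exists_cluster hK hne hev'
  refine ⟨v, hvK, ?_, hv.mono inf_le_left⟩
  exact cluster_mem_closed hS
    (Filter.eventually_inf_principal.2 (Filter.Eventually.of_forall fun t ht => hpS t ht)) hv

lemma flow_converges (f : E → ℝ) (hf : ContDiff ℝ (⊤ : ℕ∞) f)
    (hMorse : ∀ y : E, gradient f y = 0 → Function.Bijective (fderiv ℝ (gradient f) y))
    (φ : ℝ → E → E)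
    (hφ0 : ∀ x, φ 0 x = x)
    (hφ : ∀ x t, HasDerivAt (fun s => φ s x) (-(gradient f (φ t x))) t)
    (hgrp : ∀ s t : ℝ, ∀ x : E, φ t (φ s x) = φ (t + s) x)
    (hcont : ∀ t : ℝ, Continuous (φ t))
    (K : Set E) (hK : IsCompact K) (x : E) (hx : ∀ t : ℝ, 0 ≤ t → φ t x ∈ K) :
    ∃ z, gradient f z = 0 ∧ z ∈ K ∧ Tendsto (fun t => φ t x) atTop (𝓝 z) := by
  set u : ℝ → E := fun t => φ t x with hu
  have hu_cont : Continuous u := continuous_iff_continuousAt.2 fun t => (hφ x t).continuousAt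
  have hevK : ∀ᶠ t in atTop, u t ∈ K := by
    filter_upwards [Filter.eventually_ge_atTop (0:ℝ)] with t ht using hx t ht
  -- the limit value L of f along the flow
  have hanti : Antitone (fun t => f (u t)) := f_antitone f hf φ hφ x
  obtain ⟨y0, hy0K, hy0min⟩ := hK.exists_isMinOn ⟨u 0, hx 0 le_rfl⟩
    (hf.continuous.continuousOn)
  have hbdd : BddBelow (Set.range fun t => f (u t)) := by
    refine ⟨f y0, fun v hv => ?_⟩
    obtain ⟨t, rfl⟩ := hv
    rcases le_or_gt 0 t with h0 | h0
    · exact hy0min (hx t h0)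
    · exact le_trans (hy0min (hx 0 le_rfl)) (hanti h0.le)
  set L := ⨅ t : ℝ, f (u t) with hL
  have hfL : Tendsto (fun t => f (u t)) atTop (𝓝 L) := tendsto_atTop_ciInf hanti hbdd
  -- every cluster point is critical with value L
  have hcrit : ∀ z, MapClusterPt z atTop u → gradient f z = 0 ∧ f z = L := by
    intro z hz
    obtain ⟨t, htt, htu⟩ := cluster_seq hz
    have hval : ∀ s : ℝ, f (φ s z) = L := by
      intro s
      have h1 : Tendsto (fun n => φ s (u (t n))) atTop (𝓝 (φ s z)) :=
        ((hcont s).tendsto z).comp htu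
      have h2 : (fun n => φ s (u (t n))) = fun n => u (s + t n) := by
        funext n
        exact hgrp (t n) s x
      have h3 : Tendsto (fun n => s + t n) atTop atTop := tendsto_atTop_add_const_left _ s htt
      have h4 : Tendsto (fun n => f (u (s + t n))) atTop (𝓝 L) := hfL.comp h3
      have h5 : Tendsto (fun n => f (φ s (u (t n)))) atTop (𝓝 (f (φ s z))) :=
        (hf.continuous.tendsto _).comp h1
      have h2' : (fun n => f (φ s (u (t n)))) = fun n => f (u (s + t n)) := by
        funext n
        rw [show φ s (u (t n)) = u (s + t n) from hgrp (t n) s x]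
      rw [h2'] at h5
      exact tendsto_nhds_unique h5 h4
    have hderiv := f_deriv_along f hf φ hφ z 0
    have hconst : (fun s => f (φ s z)) = fun _ => L := funext hval
    rw [hconst] at hderiv
    have : -‖gradient f (φ 0 z)‖^2 = 0 := by
      have := (hasDerivAt_const (0:ℝ) L).unique hderiv
      linarith [this]
    rw [hφ0] at this
    constructor
    · have : ‖gradient f z‖ = 0 := by nlinarith [norm_nonneg (gradient f z)]
      simpa using this
    · have := hval 0
      rwa [hφ0] at this
  -- uniqueness of cluster points
  have huniq : ∀ z w, z ∈ K → MapClusterPt z atTop u → w ∈ K → MapClusterPt w atTop u →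
      z = w := by
    intro z w hzK hz hwK hw
    classical
    by_contra hne
    have hCfin : {y | y ∈ K ∧ gradient f y = 0}.Finite := crit_finite f hf hMorse K hK
    set Fs := hCfin.toFinset.erase z with hFs
    have hwFs : w ∈ Fs := by
      rw [hFs, Finset.mem_erase]
      exact ⟨fun h => hne h.symm, hCfin.mem_toFinset.2 ⟨hwK, (hcrit w hw).1⟩⟩
    have hFsne : (Fs.image (dist z)).Nonempty := ⟨_, Finset.mem_image_of_mem _ hwFs⟩
    set d₀ := (Fs.image (dist z)).min' hFsne with hd₀
    have hd₀pos : 0 < d₀ := by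
      obtain ⟨y, hy, hyd⟩ := Finset.mem_image.1 ((Fs.image (dist z)).min'_mem hFsne)
      rw [hd₀, ← hyd]
      rw [dist_pos]
      exact fun h => (Finset.mem_erase.1 hy).1 h.symm
    have hd₀le : ∀ y ∈ Fs, d₀ ≤ dist z y :=
      fun y hy => Finset.min'_le _ _ (Finset.mem_image_of_mem _ hy)
    set ρ := d₀ / 2 with hρ
    have hρpos : 0 < ρ := by positivity
    -- frequently at distance exactly ρ from z
    have hfreq_lt : ∃ᶠ t in atTop, dist (u t) z < ρ := by
      have := mapClusterPt_iff_frequently.1 hz (Metric.ball z ρ) (Metric.ball_mem_nhds z hρpos)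
      exact this.mono fun t ht => by simpa [dist_comm] using ht
    have hfreq_gt : ∃ᶠ t in atTop, ρ < dist (u t) z := by
      have := mapClusterPt_iff_frequently.1 hw (Metric.ball w ρ) (Metric.ball_mem_nhds w hρpos)
      refine this.mono fun t ht => ?_
      have h1 : dist (u t) w < ρ := by simpa [dist_comm] using ht
      have h2 : d₀ ≤ dist z w := hd₀le w hwFs
      have h3 : dist z w ≤ dist z (u t) + dist (u t) w := dist_triangle _ _ _
      have h4 : ρ < dist z (u t) := by
        rw [hρ] at h1 ⊢
        linarith
      rw [dist_comm (u t) z]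
      exact h4
    have hfreq_eq : ∃ᶠ t in atTop, dist (u t) z = ρ := by
      rw [Filter.frequently_atTop]
      intro T
      rw [Filter.frequently_atTop] at hfreq_lt hfreq_gt
      obtain ⟨t1, ht1, ht1lt⟩ := hfreq_lt T
      obtain ⟨t2, ht2, ht2gt⟩ := hfreq_gt t1
      have hcontd : ContinuousOn (fun t => dist (u t) z) (Set.Icc t1 t2) :=
        (hu_cont.dist continuous_const).continuousOn
      have hIVT := intermediate_value_Icc ht2 hcontd
      have : ρ ∈ Set.Icc (dist (u t1) z) (dist (u t2) z) := ⟨ht1lt.le, ht2gt.le⟩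
      obtain ⟨t, htmem, htval⟩ := hIVT this
      exact ⟨t, le_trans ht1 htmem.1, htval⟩
    -- a cluster point at distance exactly ρ from z
    have hclosed : IsClosed {y : E | dist y z = ρ} :=
      isClosed_eq (continuous_id.dist continuous_const) continuous_const
    obtain ⟨v, hvK, hvsphere, hvcl⟩ := cluster_of_frequently hK hfreq_eq hevK hclosed
      (fun t ht => ht)
    have hvs : dist v z = ρ := hvsphere
    have hvC : v ∈ Fs := by
      rw [hFs, Finset.mem_erase]
      refine ⟨fun h => ?_, hCfin.mem_toFinset.2 ⟨hvK, (hcrit v hvcl).1⟩⟩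
      rw [h] at hvs
      simp at hvs
      rw [← hvs] at hρpos
      exact lt_irrefl _ hρpos
    have hge := hd₀le v hvC
    rw [dist_comm z v, hvs, hρ] at hge
    linarith
  -- conclude convergence
  obtain ⟨z₀, hz₀K, hz₀⟩ := exists_cluster hK atTop_neBot hevK
  refine ⟨z₀, (hcrit z₀ hz₀).1, hz₀K, ?_⟩
  by_contra hnot
  rw [Metric.tendsto_atTop] at hnot
  push_neg at hnot
  obtain ⟨ε, hε, hfail⟩ := hnot
  have hfreq : ∃ᶠ t in atTop, ε ≤ dist (u t) z₀ := by
    rw [Filter.frequently_atTop]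
    intro T
    obtain ⟨t, ht, ht2⟩ := hfail T
    exact ⟨t, ht, ht2⟩
  have hclosed : IsClosed {y : E | ε ≤ dist y z₀} :=
    isClosed_le continuous_const (continuous_id.dist continuous_const)
  obtain ⟨v, hvK, hvfar, hvcl⟩ := cluster_of_frequently hK hfreq hevK hclosed
    (fun t ht => ht)
  have heq := huniq z₀ v hz₀K hz₀ hvK hvcl
  have hvfar' : ε ≤ dist v z₀ := hvfar
  rw [← heq] at hvfar'
  simp at hvfar'
  linarith
end
section
variable {E : Type*} [NormedAddCommGroup E] [InnerProductSpace ℝ E] [FiniteDimensional ℝ E]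

lemma gradient_neg (f : E → ℝ) (hf : ContDiff ℝ (⊤ : ℕ∞) f) (y : E) :
    gradient (fun x => -(f x)) y = -(gradient f y) := by
  show (toDual ℝ E).symm (fderiv ℝ (fun x => -(f x)) y) = -(gradient f y)
  rw [fderiv_fun_neg]
  show (toDual ℝ E).symm (-(fderiv ℝ f y)) = _
  rw [map_neg]
  rfl

lemma morse_neg (f : E → ℝ) (hf : ContDiff ℝ (⊤ : ℕ∞) f)
    (hMorse : ∀ y : E, gradient f y = 0 → Function.Bijective (fderiv ℝ (gradient f) y)) :
    ∀ y : E, gradient (fun x => -(f x)) y = 0 →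
      Function.Bijective (fderiv ℝ (gradient (fun x => -(f x))) y) := by
  intro y hy
  have h0 : gradient f y = 0 := by
    have := gradient_neg f hf y
    rw [this] at hy
    simpa using hy
  have hgg : (gradient (fun x => -(f x))) = fun x => -(gradient f x) :=
    funext fun x => gradient_neg f hf x
  rw [hgg]
  have hdiff : DifferentiableAt ℝ (gradient f) y :=
    ((grad_smooth f hf).differentiable (by simp)) y
  have : fderiv ℝ (fun x => -(gradient f x)) y = -(fderiv ℝ (gradient f) y) := fderiv_neg
  rw [this]
  have hb := hMorse y h0
  have : ⇑(-(fderiv ℝ (gradient f) y)) = (fun v => -v) ∘ ⇑(fderiv ℝ (gradient f) y) := by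
    funext v; simp
  rw [this]
  exact (neg_involutive.bijective).comp hb

lemma speed_bound (f : E → ℝ) (φ : ℝ → E → E)
    (hφ : ∀ x t, HasDerivAt (fun s => φ s x) (-(gradient f (φ t x))) t)
    (M : Set E) (C : ℝ) (hC : ∀ y ∈ M, ‖gradient f y‖ ≤ C)
    (x : E) (hx : ∀ τ : ℝ, φ τ x ∈ M) (s t : ℝ) (h : s ≤ t) :
    dist (φ t x) (φ s x) ≤ C * (t - s) := by
  have key := Convex.norm_image_sub_le_of_norm_hasDerivWithin_le
    (f := fun τ => φ τ x) (f' := fun τ => -(gradient f (φ τ x))) (C := C)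
    (fun τ _ => (hφ x τ).hasDerivWithinAt)
    (fun τ _ => by simpa using hC _ (hx τ)) (convex_Icc s t) (Set.left_mem_Icc.2 h)
    (Set.right_mem_Icc.2 h)
  rw [dist_eq_norm]
  calc ‖φ t x - φ s x‖ ≤ C * ‖t - s‖ := key
  _ = C * (t - s) := by rw [Real.norm_eq_abs, abs_of_nonneg (by linarith)]

lemma W_invariant (φ : ℝ → E → E)
    (hgrp : ∀ s t : ℝ, ∀ x : E, φ t (φ s x) = φ (t + s) x)
    (hcont : ∀ t : ℝ, Continuous (φ t))
    (M : Set E) (hinv : ∀ x ∈ M, ∀ t : ℝ, φ t x ∈ M) (q : E)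
    (W : Set E) (hW : W = {y : E | y ∈ M ∧ Tendsto (fun t => φ t y) atTop (𝓝 q)}) :
    ∀ y ∈ closure W, ∀ s : ℝ, φ s y ∈ closure W := by
  have hWinv : ∀ y ∈ W, ∀ s : ℝ, φ s y ∈ W := by
    intro y hy s
    rw [hW] at hy ⊢
    refine ⟨hinv y hy.1 s, ?_⟩
    have h1 : Tendsto (fun t : ℝ => t + s) atTop atTop := tendsto_atTop_add_const_right atTop s tendsto_id
    have h2 : Tendsto (fun t : ℝ => φ (t + s) y) atTop (𝓝 q) := hy.2.comp h1
    refine h2.congr fun t => ?_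
    rw [← hgrp s t y]
  intro y hy s
  have h1 : φ s '' closure W ⊆ closure (φ s '' W) := image_closure_subset_closure_image (hcont s)
  have h2 : φ s '' W ⊆ W := by
    rintro _ ⟨w, hw, rfl⟩
    exact hWinv w hw s
  exact closure_mono h2 (h1 ⟨y, hy, rfl⟩)
end
section
variable {E : Type*} [NormedAddCommGroup E] [InnerProductSpace ℝ E] [FiniteDimensional ℝ E]

lemma backward_branch (f : E → ℝ) (hf : ContDiff ℝ (⊤ : ℕ∞) f)
    (hMorse : ∀ y : E, gradient f y = 0 → Function.Bijective (fderiv ℝ (gradient f) y))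
    (M : Set E) (hM : IsCompact M) (φ : ℝ → E → E)
    (hφ0 : ∀ x, φ 0 x = x)
    (hφ : ∀ x t, HasDerivAt (fun s => φ s x) (-(gradient f (φ t x))) t)
    (hgrp : ∀ s t : ℝ, ∀ x : E, φ t (φ s x) = φ (t + s) x)
    (hcont : ∀ t : ℝ, Continuous (φ t))
    (hinv : ∀ x ∈ M, ∀ t : ℝ, φ t x ∈ M)
    (q : E)
    (W : Set E) (hW : W = {y : E | y ∈ M ∧ Tendsto (fun t => φ t y) atTop (𝓝 q)})
    (c : E) (hc : c ∈ closure W) (hccrit : gradient f c = 0) (hcq : c ≠ q) :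
    ∃ z ∈ closure W, Tendsto (fun t => φ t z) atBot (𝓝 c) ∧ f z < f c := by
  classical
  have hWM : W ⊆ M := by rw [hW]; exact fun y hy => hy.1
  have hclM : closure W ⊆ M := by
    rw [← hM.isClosed.closure_eq]
    exact closure_mono hWM
  have hclinv := W_invariant φ hgrp hcont M hinv q W hW
  -- choose a radius
  obtain ⟨r₁, hr₁, hiso⟩ := crit_isolated f hf hMorse c hccrit
  have hcqd : 0 < dist c q := dist_pos.2 hcq
  set r := min r₁ (dist c q / 2) with hr
  have hrpos : 0 < r := lt_min hr₁ (by positivity)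
  have hrr₁ : r ≤ r₁ := min_le_left _ _
  have hrq : r < dist c q := lt_of_le_of_lt (min_le_right _ _) (by linarith)
  -- approximating sequence in W
  have hsel : ∀ n : ℕ, ∃ w, w ∈ W ∧ dist w c < min r (1/(n+1)) := by
    intro n
    have : (Metric.ball c (min r (1/(n+1)))).Nonempty → _ := fun _ => trivial
    have hmem := Metric.mem_closure_iff.1 hc (min r (1/(n+1)))
      (lt_min hrpos (by positivity))
    obtain ⟨w, hwW, hwd⟩ := hmem
    exact ⟨w, hwW, by rwa [dist_comm]⟩
  choose w hwW hwd using hsel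
  have hwM : ∀ n, w n ∈ M := fun n => hWM (hwW n)
  have hwc : Tendsto w atTop (𝓝 c) := by
    rw [tendsto_iff_dist_tendsto_zero]
    apply squeeze_zero (fun n => dist_nonneg)
      (fun n => (lt_of_lt_of_le (hwd n) (min_le_right _ _)).le)
    exact tendsto_one_div_add_atTop_nhds_zero_nat
  -- the exit time
  set A : ℕ → Set ℝ := fun n => {t : ℝ | 0 ≤ t ∧ r ≤ dist (φ t (w n)) c} with hA
  have hwq : ∀ n, Tendsto (fun t => φ t (w n)) atTop (𝓝 q) := by
    intro n
    have := hwW n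
    rw [hW] at this
    exact this.2
  have hAne : ∀ n, (A n).Nonempty := by
    intro n
    have h1 : Tendsto (fun t => dist (φ t (w n)) c) atTop (𝓝 (dist q c)) :=
      ((continuous_id.dist continuous_const).tendsto q).comp (hwq n)
    have h2 : ∀ᶠ t in atTop, r ≤ dist (φ t (w n)) c := by
      have : Set.Ici r ∈ 𝓝 (dist q c) := by
        apply Ici_mem_nhds
        rw [dist_comm]
        exact hrq
      exact h1.eventually this
    obtain ⟨t, ht, ht2⟩ := ((h2.and (Filter.eventually_ge_atTop (0:ℝ))).exists)
    exact ⟨t, ht2, ht⟩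
  have hAclosed : ∀ n, IsClosed (A n) := by
    intro n
    have hdc : Continuous fun t => dist (φ t (w n)) c :=
      (continuous_iff_continuousAt.2 fun t => (hφ (w n) t).continuousAt).dist continuous_const
    have h1 : IsClosed {t : ℝ | 0 ≤ t} := isClosed_Ici
    have h2 : IsClosed {t : ℝ | r ≤ dist (φ t (w n)) c} := isClosed_le continuous_const hdc
    exact h1.inter h2
  have hAbdd : ∀ n, BddBelow (A n) := fun n => ⟨0, fun t ht => ht.1⟩
  set T : ℕ → ℝ := fun n => sInf (A n) with hT
  have hTmem : ∀ n, T n ∈ A n := fun n => (hAclosed n).csInf_mem (hAne n) (hAbdd n)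
  have hTpos : ∀ n, 0 < T n := by
    intro n
    rcases lt_or_eq_of_le (hTmem n).1 with h | h
    · exact h
    · exfalso
      have := (hTmem n).2
      rw [← h, hφ0] at this
      have h2 := lt_of_lt_of_le (hwd n) (min_le_left _ _)
      linarith
  have hTlt : ∀ n, ∀ t, 0 ≤ t → t < T n → dist (φ t (w n)) c < r := by
    intro n t ht htT
    by_contra hge
    push_neg at hge
    exact absurd (csInf_le (hAbdd n) ⟨ht, hge⟩) (not_le.2 htT)
  have hTeq : ∀ n, dist (φ (T n) (w n)) c = r := by
    intro n
    refine le_antisymm ?_ (hTmem n).2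
    by_contra hlt
    push_neg at hlt
    have hca : ContinuousAt (fun t => dist (φ t (w n)) c) (T n) :=
      ((hφ (w n) (T n)).continuousAt.dist continuousAt_const)
    have : ∀ᶠ t in 𝓝 (T n), r < dist (φ t (w n)) c :=
      hca.eventually (eventually_gt_nhds hlt)
    obtain ⟨δ, hδ, hδ2⟩ := Metric.eventually_nhds_iff.1 this
    set t₀ := max 0 (T n - δ/2) with ht₀
    have h1 : t₀ < T n := by
      rw [ht₀, max_lt_iff]
      constructor
      · exact hTpos n
      · linarith
    have h2 : 0 ≤ t₀ := le_max_left _ _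
    have h3 : dist t₀ (T n) < δ := by
      rw [Real.dist_eq, abs_lt]
      constructor
      · have : T n - δ/2 ≤ t₀ := le_max_right _ _
        linarith
      · linarith
    have := hδ2 h3
    have := hTlt n t₀ h2 h1
    linarith
  -- subsequence of exit points converging in M
  set z : ℕ → E := fun n => φ (T n) (w n) with hz
  have hzM : ∀ n, z n ∈ M := fun n => hinv _ (hwM n) _
  have hzW : ∀ n, z n ∈ closure W := fun n =>
    (W_invariant φ hgrp hcont M hinv q W hW) (w n) (subset_closure (hwW n)) (T n)
  obtain ⟨zl, hzlM, σ, hσ, hzσ⟩ := hM.tendsto_subseq hzM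
  -- speed bound constant
  obtain ⟨C, hC⟩ : ∃ C, ∀ y ∈ M, ‖gradient f y‖ ≤ C := by
    rcases M.eq_empty_or_nonempty with h | h
    · exact ⟨0, fun y hy => absurd hy (by rw [h]; exact Set.notMem_empty y)⟩
    · obtain ⟨y0, hy0, hy0max⟩ := hM.exists_isMaxOn h
        ((grad_smooth f hf).continuous.norm.continuousOn)
      exact ⟨‖gradient f y0‖, fun y hy => hy0max hy⟩
  -- the exit times tend to infinity
  have hTtop : Tendsto (fun n => T (σ n)) atTop atTop := by
    by_contra hnot
    rw [tendsto_atTop] at hnot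
    push_neg at hnot
    obtain ⟨B, hB⟩ := hnot
    have hfreq : ∃ᶠ n in atTop, T (σ n) < B := by
      exact hB
    obtain ⟨ψ, hψ, hψ2⟩ := Filter.extraction_of_frequently_atTop hfreq
    have hbdd : ∀ n, T (σ (ψ n)) ∈ Set.Icc 0 B :=
      fun n => ⟨(hTmem (σ (ψ n))).1, (hψ2 n).le⟩
    obtain ⟨T₀, hT₀mem, θ, hθ, hθ2⟩ := tendsto_subseq_of_bounded
      (Metric.isBounded_Icc 0 B) hbdd
    set m : ℕ → ℕ := fun n => σ (ψ (θ n)) with hm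
    have hmmono : StrictMono m := hσ.comp (hψ.comp hθ)
    have hwm : Tendsto (fun n => w (m n)) atTop (𝓝 c) :=
      hwc.comp hmmono.tendsto_atTop
    -- dist (z (m n)) c → 0
    have hd1 : ∀ n, dist (z (m n)) c ≤ C * |T (m n) - T₀| + dist (φ T₀ (w (m n))) c := by
      intro n
      have htri := dist_triangle (z (m n)) (φ T₀ (w (m n))) c
      have hsp : dist (φ (T (m n)) (w (m n))) (φ T₀ (w (m n))) ≤ C * |T (m n) - T₀| := by
        rcases le_total T₀ (T (m n)) with h | h
        · have := speed_bound f φ hφ M C hC (w (m n)) (fun τ => hinv _ (hwM _) τ) T₀ (T (m n)) h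
          rwa [abs_of_nonneg (by linarith)]
        · have := speed_bound f φ hφ M C hC (w (m n)) (fun τ => hinv _ (hwM _) τ) (T (m n)) T₀ h
          rw [dist_comm]
          rwa [abs_of_nonpos (by linarith), neg_sub]
      calc dist (z (m n)) c ≤ dist (z (m n)) (φ T₀ (w (m n))) + dist (φ T₀ (w (m n))) c := htri
      _ ≤ C * |T (m n) - T₀| + dist (φ T₀ (w (m n))) c := by
          exact add_le_add_left hsp _
    have hlim1 : Tendsto (fun n => C * |T (m n) - T₀|) atTop (𝓝 0) := by
      have h1 : Tendsto (fun n => T (m n)) atTop (𝓝 T₀) := hθ2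
      have h2 : Tendsto (fun n => |T (m n) - T₀|) atTop (𝓝 0) := by
        have h2a : Tendsto (fun n => T (m n) - T₀) atTop (𝓝 (T₀ - T₀)) :=
          h1.sub (tendsto_const_nhds (x := T₀))
        rw [sub_self] at h2a
        have h2b := h2a.abs
        simpa using h2b
      have := h2.const_mul C
      simpa using this
    have hlim2 : Tendsto (fun n => dist (φ T₀ (w (m n))) c) atTop (𝓝 0) := by
      have h1 : Tendsto (fun n => φ T₀ (w (m n))) atTop (𝓝 (φ T₀ c)) :=
        ((hcont T₀).tendsto c).comp hwm
      rw [crit_fixed f hf φ hφ0 hφ hgrp c hccrit T₀] at h1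
      rw [tendsto_iff_dist_tendsto_zero] at h1
      exact h1
    have hlim : Tendsto (fun n => dist (z (m n)) c) atTop (𝓝 0) := by
      apply squeeze_zero (fun n => dist_nonneg) hd1
      have := hlim1.add hlim2
      simpa using this
    have : Tendsto (fun _ : ℕ => r) atTop (𝓝 0) := by
      refine hlim.congr fun n => ?_
      rw [hTeq (m n)]
    have := tendsto_nhds_unique this tendsto_const_nhds
    linarith
  -- the limit point: backward orbit stays in the ball
  have hzlW : zl ∈ closure W := by
    have : IsClosed (closure W) := isClosed_closure
    exact this.mem_of_tendsto hzσ (Filter.Eventually.of_forall fun n => hzW (σ n))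
  have hback : ∀ s : ℝ, s ≤ 0 → φ s zl ∈ Metric.closedBall c r ∩ M := by
    intro s hs
    have h1 : Tendsto (fun n => φ s (z (σ n))) atTop (𝓝 (φ s zl)) :=
      ((hcont s).tendsto zl).comp hzσ
    have h2 : ∀ n, φ s (z (σ n)) = φ (s + T (σ n)) (w (σ n)) := by
      intro n
      rw [hz]
      show φ s (φ (T (σ n)) (w (σ n))) = _
      rw [hgrp]
    have h3 : ∀ᶠ n in atTop, φ s (z (σ n)) ∈ Metric.closedBall c r := by
      have hev : ∀ᶠ n in atTop, -s ≤ T (σ n) := hTtop.eventually_ge_atTop (-s)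
      filter_upwards [hev] with n hn
      rw [h2 n, Metric.mem_closedBall]
      have hst : 0 ≤ s + T (σ n) := by linarith
      have hle : s + T (σ n) ≤ T (σ n) := by linarith
      rcases lt_or_eq_of_le hle with h | h
      · exact (hTlt _ _ hst h).le
      · rw [h, hTeq]
    have h4 : ∀ᶠ n in atTop, φ s (z (σ n)) ∈ Metric.closedBall c r ∩ M :=
      h3.mono fun n hn => ⟨hn, hinv _ (hzM _) _⟩
    exact (Metric.isClosed_closedBall.inter hM.isClosed).mem_of_tendsto h1 h4
  -- apply forward convergence to the time-reversed flow
  set ψ : ℝ → E → E := fun t x => φ (-t) x with hψdef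
  have hψ0 : ∀ x, ψ 0 x = x := by intro x; rw [hψdef]; simpa using hφ0 x
  have hgradneg : (gradient (fun x => -(f x))) = fun x => -(gradient f x) :=
    funext fun x => gradient_neg f hf x
  have hψderiv : ∀ x t, HasDerivAt (fun s => ψ s x)
      (-(gradient (fun y => -(f y)) (ψ t x))) t := by
    intro x t
    have h1 : HasDerivAt (fun s : ℝ => -s) (-1) t := (hasDerivAt_neg t)
    have h2 : HasDerivAt (fun s => φ s x) (-(gradient f (φ (-t) x))) (-t) := hφ x (-t)
    have h3 := HasDerivAt.scomp t h2 h1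
    have : ((-1 : ℝ) • -gradient f (φ (-t) x)) = gradient f (φ (-t) x) := by
      simp
    rw [this] at h3
    have h4 : -(gradient (fun y => -(f y)) (ψ t x)) = gradient f (φ (-t) x) := by
      rw [hgradneg]
      simp [hψdef]
    rw [h4]
    exact h3
  have hψgrp : ∀ s t : ℝ, ∀ x : E, ψ t (ψ s x) = ψ (t + s) x := by
    intro s t x
    rw [hψdef]
    show φ (-t) (φ (-s) x) = φ (-(t+s)) x
    rw [hgrp, neg_add]
  have hψcont : ∀ t : ℝ, Continuous (ψ t) := fun t => hcont (-t)
  obtain ⟨c', hc'crit, hc'mem, hc'tend⟩ := flow_converges (fun y => -(f y)) hf.neg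
    (morse_neg f hf hMorse) ψ hψ0 hψderiv hψgrp hψcont
    (Metric.closedBall c r ∩ M) (hM.inter_left Metric.isClosed_closedBall) zl
    (fun t ht => hback (-t) (by linarith))
  have hc'crit' : gradient f c' = 0 := by
    rw [hgradneg] at hc'crit
    simpa using hc'crit
  have hc'c : c' = c := hiso c' (Metric.closedBall_subset_closedBall hrr₁ hc'mem.1) hc'crit'
  rw [hc'c] at hc'tend
  -- convert to atBot convergence
  have hbot : Tendsto (fun t => φ t zl) atBot (𝓝 c) := by
    have h1 : Tendsto (fun t : ℝ => -t) atBot atTop := tendsto_neg_atBot_atTop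
    have h2 := hc'tend.comp h1
    refine h2.congr fun t => ?_
    show ψ (-t) zl = φ t zl
    rw [hψdef]
    simp
  -- f zl < f c
  have hfle : f zl ≤ f c := by
    have h1 : Tendsto (fun s => f (φ s zl)) atBot (𝓝 (f c)) :=
      (hf.continuous.tendsto c).comp hbot
    have h2 : ∀ᶠ s in atBot, f zl ≤ f (φ s zl) := by
      filter_upwards [Filter.eventually_le_atBot (0:ℝ)] with s hs
      have h3 : f (φ 0 zl) ≤ f (φ s zl) := f_antitone f hf φ hφ zl hs
      rwa [hφ0] at h3
    exact ge_of_tendsto h1 h2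
  have hzlr : dist zl c = r := by
    have h1 : Tendsto (fun n => dist (z (σ n)) c) atTop (𝓝 (dist zl c)) :=
      ((continuous_id.dist continuous_const).tendsto zl).comp hzσ
    have h2 : (fun n => dist (z (σ n)) c) = fun _ => r := funext fun n => hTeq (σ n)
    rw [h2] at h1
    exact tendsto_nhds_unique h1 tendsto_const_nhds
  have hflt : f zl < f c := by
    rcases lt_or_eq_of_le hfle with h | h
    · exact h
    · exfalso
      have h1 : Tendsto (fun τ => f (φ τ zl)) atBot (𝓝 (f c)) :=
        (hf.continuous.tendsto c).comp hbot
      -- f is constant on the backward orbit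
      have hconst : ∀ s : ℝ, s ≤ 0 → f (φ s zl) = f c := by
        intro s hs
        have hle2 : f (φ s zl) ≤ f c := by
          refine ge_of_tendsto h1 ?_
          filter_upwards [Filter.eventually_le_atBot s] with τ hτ
          exact f_antitone f hf φ hφ zl hτ
        have hle3 : f zl ≤ f (φ s zl) := by
          have h3 : f (φ 0 zl) ≤ f (φ s zl) := f_antitone f hf φ hφ zl hs
          rwa [hφ0] at h3
        rw [h] at hle3
        linarith
      have hev : (fun τ => f (φ τ zl)) =ᶠ[𝓝 (-1 : ℝ)] fun _ => f c := by
        filter_upwards [Iio_mem_nhds (show (-1:ℝ) < 0 by norm_num)] with τ hτ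
        exact hconst τ hτ.le
      have hd1 := f_deriv_along f hf φ hφ zl (-1)
      have hd2 : HasDerivAt (fun τ => f (φ τ zl)) 0 (-1) :=
        (hasDerivAt_const (-1 : ℝ) (f c)).congr_of_eventuallyEq hev
      have hzero : -‖gradient f (φ (-1) zl)‖^2 = 0 := hd1.unique hd2
      have hgz : gradient f (φ (-1) zl) = 0 := by
        have : ‖gradient f (φ (-1) zl)‖ = 0 := by nlinarith [norm_nonneg (gradient f (φ (-1) zl))]
        simpa using this
      have hmem := hback (-1) (by norm_num)
      have hceq : φ (-1) zl = c :=
        hiso _ (Metric.closedBall_subset_closedBall hrr₁ hmem.1) hgz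
      have hzlc : zl = c := by
        have h2 : φ 1 (φ (-1) zl) = φ 0 zl := by rw [hgrp]; norm_num
        rw [hφ0] at h2
        rw [hceq, crit_fixed f hf φ hφ0 hφ hgrp c hccrit 1] at h2
        exact h2.symm
      rw [hzlc] at hzlr
      simp at hzlr
      linarith
  exact ⟨zl, hzlW, hbot, hflt⟩
end
section
variable {E : Type*} [NormedAddCommGroup E] [InnerProductSpace ℝ E] [FiniteDimensional ℝ E]

lemma chain_to_q (f : E → ℝ) (hf : ContDiff ℝ (⊤ : ℕ∞) f)
    (hMorse : ∀ y : E, gradient f y = 0 → Function.Bijective (fderiv ℝ (gradient f) y))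
    (M : Set E) (hM : IsCompact M) (φ : ℝ → E → E)
    (hφ0 : ∀ x, φ 0 x = x)
    (hφ : ∀ x t, HasDerivAt (fun s => φ s x) (-(gradient f (φ t x))) t)
    (hgrp : ∀ s t : ℝ, ∀ x : E, φ t (φ s x) = φ (t + s) x)
    (hcont : ∀ t : ℝ, Continuous (φ t))
    (hinv : ∀ x ∈ M, ∀ t : ℝ, φ t x ∈ M)
    (q : E)
    (W : Set E) (hW : W = {y : E | y ∈ M ∧ Tendsto (fun t => φ t y) atTop (𝓝 q)})
    (hqW : q ∈ closure W) :
    ∀ N : ℕ, ∀ c : E, c ∈ closure W → gradient f c = 0 →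
    {x | x ∈ closure W ∧ gradient f x = 0 ∧ f x < f c}.ncard ≤ N →
    ∃ n : ℕ, ∃ d : Fin (n + 1) → E,
      d 0 = c ∧ d (Fin.last n) = q ∧
      (∀ i, d i ∈ closure W ∧ gradient f (d i) = 0) ∧
      (∀ i : Fin n, ∃ y ∈ closure W,
        Tendsto (fun t => φ t y) atBot (𝓝 (d i.castSucc)) ∧
        Tendsto (fun t => φ t y) atTop (𝓝 (d i.succ))) := by
  have hWM : W ⊆ M := by rw [hW]; exact fun y hy => hy.1
  have hclM : closure W ⊆ M := by
    rw [← hM.isClosed.closure_eq]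
    exact closure_mono hWM
  have hclinv := W_invariant φ hgrp hcont M hinv q W hW
  have hfin : {x | x ∈ M ∧ gradient f x = 0}.Finite := crit_finite f hf hMorse M hM
  intro N
  induction N with
  | zero =>
    intro c hcW hccrit hcard
    rcases eq_or_ne c q with rfl | hcq
    · refine ⟨0, fun _ => c, rfl, rfl, fun i => ⟨hcW, hccrit⟩, fun i => i.elim0⟩
    · exfalso
      obtain ⟨z, hzW, hzbot, hzlt⟩ := backward_branch f hf hMorse M hM φ hφ0 hφ hgrp hcont
        hinv q W hW c hcW hccrit hcq
      obtain ⟨c₁, hc₁crit, hc₁M, hc₁tend⟩ := flow_converges f hf hMorse φ hφ0 hφ hgrp hcont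
        M hM z (fun t _ => hinv z (hclM hzW) t)
      have hc₁W : c₁ ∈ closure W :=
        isClosed_closure.mem_of_tendsto hc₁tend
          (Filter.Eventually.of_forall fun t => hclinv z hzW t)
      have hfc₁ : f c₁ ≤ f z := by
        have h1 : Tendsto (fun t => f (φ t z)) atTop (𝓝 (f c₁)) :=
          (hf.continuous.tendsto c₁).comp hc₁tend
        refine le_of_tendsto h1 ?_
        filter_upwards [Filter.eventually_ge_atTop (0:ℝ)] with t ht
        have h3 : f (φ t z) ≤ f (φ 0 z) := f_antitone f hf φ hφ z ht
        rwa [hφ0] at h3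
      have hc₁mem : c₁ ∈ {x | x ∈ closure W ∧ gradient f x = 0 ∧ f x < f c} :=
        ⟨hc₁W, hc₁crit, lt_of_le_of_lt hfc₁ hzlt⟩
      have hSfin : {x | x ∈ closure W ∧ gradient f x = 0 ∧ f x < f c}.Finite :=
        hfin.subset fun x hx => ⟨hclM hx.1, hx.2.1⟩
      have : 0 < {x | x ∈ closure W ∧ gradient f x = 0 ∧ f x < f c}.ncard :=
        Set.ncard_pos hSfin |>.2 ⟨c₁, hc₁mem⟩
      omega
  | succ N ih =>
    intro c hcW hccrit hcard
    rcases eq_or_ne c q with rfl | hcq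
    · refine ⟨0, fun _ => c, rfl, rfl, fun i => ⟨hcW, hccrit⟩, fun i => i.elim0⟩
    · obtain ⟨z, hzW, hzbot, hzlt⟩ := backward_branch f hf hMorse M hM φ hφ0 hφ hgrp hcont
        hinv q W hW c hcW hccrit hcq
      obtain ⟨c₁, hc₁crit, hc₁M, hc₁tend⟩ := flow_converges f hf hMorse φ hφ0 hφ hgrp hcont
        M hM z (fun t _ => hinv z (hclM hzW) t)
      have hc₁W : c₁ ∈ closure W :=
        isClosed_closure.mem_of_tendsto hc₁tend
          (Filter.Eventually.of_forall fun t => hclinv z hzW t)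
      have hfc₁ : f c₁ ≤ f z := by
        have h1 : Tendsto (fun t => f (φ t z)) atTop (𝓝 (f c₁)) :=
          (hf.continuous.tendsto c₁).comp hc₁tend
        refine le_of_tendsto h1 ?_
        filter_upwards [Filter.eventually_ge_atTop (0:ℝ)] with t ht
        have h3 : f (φ t z) ≤ f (φ 0 z) := f_antitone f hf φ hφ z ht
        rwa [hφ0] at h3
      have hfc₁c : f c₁ < f c := lt_of_le_of_lt hfc₁ hzlt
      have hc₁mem : c₁ ∈ {x | x ∈ closure W ∧ gradient f x = 0 ∧ f x < f c} :=
        ⟨hc₁W, hc₁crit, hfc₁c⟩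
      have hSfin : {x | x ∈ closure W ∧ gradient f x = 0 ∧ f x < f c}.Finite :=
        hfin.subset fun x hx => ⟨hclM hx.1, hx.2.1⟩
      -- the measure decreases
      have hsub : {x | x ∈ closure W ∧ gradient f x = 0 ∧ f x < f c₁} ⊆
          {x | x ∈ closure W ∧ gradient f x = 0 ∧ f x < f c} \ {c₁} := by
        intro x hx
        refine ⟨⟨hx.1, hx.2.1, lt_trans hx.2.2 hfc₁c⟩, ?_⟩
        intro hxc₁
        rw [Set.mem_singleton_iff] at hxc₁
        rw [hxc₁] at hx
        exact lt_irrefl _ hx.2.2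
      have hcard' : {x | x ∈ closure W ∧ gradient f x = 0 ∧ f x < f c₁}.ncard ≤ N := by
        have h1 := Set.ncard_le_ncard hsub hSfin.diff
        have h2 := Set.ncard_diff_singleton_lt_of_mem hc₁mem hSfin
        omega
      obtain ⟨m, d', hd'0, hd'last, hd'mem, hd'seg⟩ := ih c₁ hc₁W hc₁crit hcard'
      refine ⟨m + 1, Fin.cons c d', Fin.cons_zero _ _, ?_, ?_, ?_⟩
      · rw [← Fin.succ_last, Fin.cons_succ]
        exact hd'last
      · intro i
        refine Fin.cases ?_ ?_ i
        · rw [Fin.cons_zero]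
          exact ⟨hcW, hccrit⟩
        · intro j
          rw [Fin.cons_succ]
          exact hd'mem j
      · intro i
        refine Fin.cases ?_ ?_ i
        · refine ⟨z, hzW, ?_, ?_⟩
          · rw [Fin.castSucc_zero, Fin.cons_zero]
            exact hzbot
          · rw [show (0 : Fin (m+1)).succ = (0 : Fin (m+1)).succ from rfl, Fin.cons_succ, hd'0]
            exact hc₁tend
        · intro j
          obtain ⟨y, hyW, hybot, hytop⟩ := hd'seg j
          refine ⟨y, hyW, ?_, ?_⟩
          · rw [← Fin.succ_castSucc, Fin.cons_succ]
            exact hybot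
          · rw [Fin.cons_succ]
            exact hytop
end
/-- Every point `p` in the closure of the stable manifold `W^s(q)` of a local minimum `q`
of a Morse function lies on a piecewise (broken) flow line of the negative gradient flow
descending to `q`; in particular, if `p` is noncritical, then the forward flow from `p`
limits to a critical point lying in `closure (W^s q)`. -/
theorem stmt6
    {E : Type*} [NormedAddCommGroup E] [InnerProductSpace ℝ E] [FiniteDimensional ℝ E]
    (f : E → ℝ) (hf : ContDiff ℝ (⊤ : ℕ∞) f)
    (hMorse : ∀ y : E, gradient f y = 0 → Function.Bijective (fderiv ℝ (gradient f) y))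
    (M : Set E) (hM : IsCompact M) (hMconn : IsConnected M)
    (φ : ℝ → E → E)
    (hφ0 : ∀ x, φ 0 x = x)
    (hφ : ∀ x t, HasDerivAt (fun s => φ s x) (-(gradient f (φ t x))) t)
    (hgrp : ∀ s t : ℝ, ∀ x : E, φ t (φ s x) = φ (t + s) x)
    (hcont : ∀ t : ℝ, Continuous (φ t))
    (hinv : ∀ x ∈ M, ∀ t : ℝ, φ t x ∈ M)
    (q : E) (hq : q ∈ M) (hqcrit : gradient f q = 0) (hqmin : IsLocalMin f q)
    (W : Set E) (hW : W = {y : E | y ∈ M ∧ Tendsto (fun t => φ t y) atTop (𝓝 q)})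
    (p : E) (hp : p ∈ closure W) :
    (∃ n : ℕ, ∃ c : Fin (n + 1) → E,
      (∀ i, c i ∈ closure W ∧ gradient f (c i) = 0) ∧
      c (Fin.last n) = q ∧
      (p = c 0 ∨ Tendsto (fun t => φ t p) atTop (𝓝 (c 0))) ∧
      (∀ i : Fin n, ∃ y ∈ closure W,
        Tendsto (fun t => φ t y) atBot (𝓝 (c i.castSucc)) ∧
        Tendsto (fun t => φ t y) atTop (𝓝 (c i.succ))))
    ∧ (gradient f p ≠ 0 → ∃ p', gradient f p' = 0 ∧ p' ∈ closure W ∧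
        Tendsto (fun t => φ t p) atTop (𝓝 p')) := by
  have hWM : W ⊆ M := by rw [hW]; exact fun y hy => hy.1
  have hclM : closure W ⊆ M := by
    rw [← hM.isClosed.closure_eq]
    exact closure_mono hWM
  have hclinv := W_invariant φ hgrp hcont M hinv q W hW
  have hqW : q ∈ closure W := by
    apply subset_closure
    rw [hW]
    refine ⟨hq, ?_⟩
    have h1 : (fun t => φ t q) = fun _ => q :=
      funext fun t => crit_fixed f hf φ hφ0 hφ hgrp q hqcrit t
    rw [h1]
    exact tendsto_const_nhds
  obtain ⟨c₀, hc₀crit, hc₀M, hc₀tend⟩ := flow_converges f hf hMorse φ hφ0 hφ hgrp hcont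
    M hM p (fun t _ => hinv p (hclM hp) t)
  have hc₀W : c₀ ∈ closure W :=
    isClosed_closure.mem_of_tendsto hc₀tend
      (Filter.Eventually.of_forall fun t => hclinv p hp t)
  constructor
  · obtain ⟨n, d, hd0, hdlast, hdmem, hdseg⟩ := chain_to_q f hf hMorse M hM φ hφ0 hφ hgrp
      hcont hinv q W hW hqW
      {x | x ∈ closure W ∧ gradient f x = 0 ∧ f x < f c₀}.ncard c₀ hc₀W hc₀crit le_rfl
    refine ⟨n, d, hdmem, hdlast, Or.inr ?_, hdseg⟩
    rw [hd0]
    exact hc₀tend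
  · intro _
    exact ⟨c₀, hc₀crit, hc₀W, hc₀tend⟩
end

section
/- If p is a critical point of a Morse function f lying in the closure of the stable manifold W^s(q) of a local minimum q and p ≠ q, then there exists a noncritical point y ∈ closure(W^s(q)) whose backward flow limits to p: lim_{t→-∞} φ_t(y) = p. -/
open Filter Topology

/-- If `p` is a critical point of a Morse function lying in the closure of the stable
manifold `W^s(q)` of a local minimum `q` and `p ≠ q`, then there is a noncritical point
`y ∈ closure (W^s q)` whose backward flow limits to `p`. -/
theorem stmt7
    {E : Type*} [NormedAddCommGroup E] [InnerProductSpace ℝ E] [FiniteDimensional ℝ E]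
    (f : E → ℝ) (hf : ContDiff ℝ (⊤ : ℕ∞) f)
    (hMorse : ∀ y : E, gradient f y = 0 → Function.Bijective (fderiv ℝ (gradient f) y))
    (M : Set E) (hM : IsCompact M) (hMconn : IsConnected M)
    (φ : ℝ → E → E)
    (hφ0 : ∀ x, φ 0 x = x)
    (hφ : ∀ x t, HasDerivAt (fun s => φ s x) (-(gradient f (φ t x))) t)
    (hgrp : ∀ s t : ℝ, ∀ x : E, φ t (φ s x) = φ (t + s) x)
    (hcont : ∀ t : ℝ, Continuous (φ t))
    (hinv : ∀ x ∈ M, ∀ t : ℝ, φ t x ∈ M)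
    (q : E) (hq : q ∈ M) (hqcrit : gradient f q = 0) (hqmin : IsLocalMin f q)
    (W : Set E) (hW : W = {y : E | y ∈ M ∧ Tendsto (fun t => φ t y) atTop (𝓝 q)})
    (p : E) (hp : p ∈ closure W) (hpcrit : gradient f p = 0) (hpq : p ≠ q) :
    ∃ y ∈ closure W, gradient f y ≠ 0 ∧ Tendsto (fun t => φ t y) atBot (𝓝 p) := by
  classical
  have hfd : Differentiable ℝ f := hf.differentiable (by simp)
  have hMclosed : IsClosed M := hM.isClosed
  have hWM : W ⊆ M := by rw [hW]; exact fun y hy => hy.1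
  have hclWM : closure W ⊆ M := hMclosed.closure_subset_iff.mpr hWM
  have hpM : p ∈ M := hclWM hp
  -- the gradient of `f` is smooth
  have hgradc : ContDiff ℝ (⊤ : ℕ∞) (gradient f) := by
    have h1 : ContDiff ℝ (⊤ : ℕ∞) (fderiv ℝ f) := hf.fderiv_right (by simp)
    exact ((InnerProductSpace.toDual ℝ E).symm.contDiff).comp h1
  -- continuity of the flow in time
  have hφcontT : ∀ x : E, Continuous (fun s => φ s x) := fun x =>
    continuous_iff_continuousAt.mpr fun t => (hφ x t).continuousAt
  -- derivative of `f` along the flow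
  have hfphi : ∀ x t, HasDerivAt (fun s => f (φ s x)) (-‖gradient f (φ t x)‖ ^ 2) t := by
    intro x t
    have hg : HasFDerivAt f ((InnerProductSpace.toDual ℝ E) (gradient f (φ t x))) (φ t x) :=
      (hfd (φ t x)).hasGradientAt
    have h2 := hg.comp_hasDerivAt t (hφ x t)
    refine h2.congr_deriv ?_
    rw [InnerProductSpace.toDual_apply_apply, inner_neg_right, real_inner_self_eq_norm_sq]
  -- invariance of W
  have hWinv : ∀ x ∈ W, ∀ t : ℝ, φ t x ∈ W := by
    intro x hx t
    rw [hW] at hx ⊢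
    refine ⟨hinv x hx.1 t, ?_⟩
    have := hx.2.comp (tendsto_atTop_add_const_right atTop t tendsto_id)
    refine this.congr fun s => ?_
    simp [hgrp t s x, add_comm]
  -- isolation of p among critical points : a radius r
  obtain ⟨r, hr0, hrq, hiso⟩ :
      ∃ r > 0, r < dist p q ∧ ∀ z ∈ Metric.closedBall p r, gradient f z = 0 → z = p := by

    have hbij := hMorse p hpcrit
    set A := fderiv ℝ (gradient f) p with hA_def
    have hbij' : Function.Bijective (A.toLinearMap : E →ₗ[ℝ] E) := by
      simpa using hbij
    let e0 : E ≃ₗ[ℝ] E := LinearEquiv.ofBijective A.toLinearMap hbij'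
    let e : E ≃L[ℝ] E := e0.toContinuousLinearEquiv
    have hcoe : (e : E →L[ℝ] E) = A := by
      apply ContinuousLinearMap.coe_injective
      exact congrArg LinearEquiv.toLinearMap (e0.toLinearEquiv_toContinuousLinearEquiv)
    have hsd : HasStrictFDerivAt (gradient f) (e : E →L[ℝ] E) p := by
      rw [hcoe, hA_def]
      exact (hgradc.contDiffAt).hasStrictFDerivAt (by simp)
    have hinj : Set.InjOn (gradient f) ((hsd.toOpenPartialHomeomorph _).source) :=
      (hsd.toOpenPartialHomeomorph _).injOn
    have hsrc : (hsd.toOpenPartialHomeomorph _).source ∈ 𝓝 p :=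
      (hsd.toOpenPartialHomeomorph _).open_source.mem_nhds hsd.mem_toOpenPartialHomeomorph_source
    obtain ⟨ε, hε0, hball⟩ := Metric.mem_nhds_iff.mp hsrc
    have hdpq : 0 < dist p q := dist_pos.mpr hpq
    refine ⟨min (ε/2) (dist p q / 2), by positivity, ?_, ?_⟩
    · calc min (ε/2) (dist p q / 2) ≤ dist p q / 2 := min_le_right _ _
        _ < dist p q := by linarith
    · intro z hz hz0
      have hzsrc : z ∈ (hsd.toOpenPartialHomeomorph _).source := by
        apply hball
        rw [Metric.mem_ball]
        calc dist z p ≤ min (ε/2) (dist p q / 2) := Metric.mem_closedBall.mp hz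
          _ ≤ ε/2 := min_le_left _ _
          _ < ε := by linarith
      have hpsrc : p ∈ (hsd.toOpenPartialHomeomorph _).source := hsd.mem_toOpenPartialHomeomorph_source
      exact hinj hzsrc hpsrc (by rw [hz0, hpcrit])

  -- Lipschitz constant for the gradient on a large ball containing M
  obtain ⟨K, S, hMS, hSconv, hLip⟩ :
      ∃ (K : NNReal) (S : Set E), M ⊆ S ∧ Convex ℝ S ∧
        LipschitzOnWith K (fun x => -(gradient f x)) S := by

    obtain ⟨R, hMR⟩ := hM.isBounded.subset_closedBall 0
    set S := Metric.closedBall (0:E) R with hS_def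
    have hSc : IsCompact S := isCompact_closedBall _ _
    have hdiff : Differentiable ℝ (fun x => -(gradient f x)) :=
      (hgradc.differentiable (by simp)).neg
    have hcontd : ContinuousOn (fun x => ‖fderiv ℝ (fun x => -(gradient f x)) x‖) S := by
      have h1 : ContDiff ℝ (⊤ : ℕ∞) (fun x => -(gradient f x)) := hgradc.neg
      exact (h1.continuous_fderiv (by simp)).norm.continuousOn
    obtain ⟨C, hC⟩ := hSc.exists_bound_of_continuousOn hcontd
    refine ⟨C.toNNReal, S, hMR, convex_closedBall _ _, ?_⟩
    apply (convex_closedBall (0:E) R).lipschitzOnWith_of_nnnorm_fderiv_le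
      (fun x _ => hdiff x)
    intro x hx
    rw [← NNReal.coe_le_coe, coe_nnnorm, Real.coe_toNNReal']
    exact le_max_of_le_left ((Real.norm_eq_abs _ ▸ le_abs_self _).trans (hC x hx))

  -- Grönwall estimate against the constant solution p
  have hGron : ∀ x ∈ M, ∀ T : ℝ, ∀ s ∈ Set.Icc (0:ℝ) T,
      dist (φ s x) p ≤ dist x p * Real.exp (K * s) := by

    intro x hx T s hs
    have key := dist_le_of_trajectories_ODE_of_mem
      (v := fun _ y => -(gradient f y)) (s := fun _ => S) (K := K)
      (f := fun s => φ s x) (g := fun _ => p) (a := 0) (b := T) (δ := dist x p)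
      (fun _ _ => hLip)
      ((hφcontT x).continuousOn)
      (fun t _ => (hφ x t).hasDerivWithinAt)
      (fun t _ => hMS (hinv x hx t))
      continuousOn_const
      (fun t _ => by
        simp only [hpcrit, neg_zero]
        exact (hasDerivWithinAt_const _ _ p))
      (fun t _ => hMS hpM)
      (by simp only [hφ0]; exact le_rfl)
    have := key s hs
    simpa using this

  -- construction of the sequence y_n on the sphere
  obtain ⟨y, hyW, hydist, hyball, hyback⟩ :
      ∃ y : E, y ∈ closure W ∧ r ≤ dist y p ∧ y ∈ Metric.closedBall p r ∧
        ∀ s : ℝ, 0 ≤ s → φ (-s) y ∈ Metric.closedBall p r := by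

    have hstep : ∀ n : ℕ, ∃ yn : E, yn ∈ W ∧ yn ∈ Metric.closedBall p r ∧ r ≤ dist yn p ∧
        ∃ T : ℝ, (n:ℝ) ≤ T ∧ ∀ s : ℝ, 0 ≤ s → s ≤ T → φ (-s) yn ∈ Metric.closedBall p r := by
      intro n
      set m : ℝ := (n : ℝ) + 1 with hm_def
      have hm0 : (0:ℝ) < m := by positivity
      set δ : ℝ := r * Real.exp (-(K * m)) with hδ_def
      have hδ0 : 0 < δ := by positivity
      obtain ⟨x, hxW, hxd⟩ := Metric.mem_closure_iff.mp hp δ hδ0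
      rw [dist_comm] at hxd
      have hxM : x ∈ M := hWM hxW
      have hball : ∀ s : ℝ, 0 ≤ s → s ≤ m → φ s x ∈ Metric.ball p r := by
        intro s hs0 hsm
        rw [Metric.mem_ball]
        have h1 := hGron x hxM m s ⟨hs0, hsm⟩
        have h2 : dist x p * Real.exp (K * s) < δ * Real.exp (K * s) := by
          have := Real.exp_pos ((K:ℝ) * s)
          exact mul_lt_mul_of_pos_right hxd this
        have h3 : δ * Real.exp (K * s) ≤ δ * Real.exp (K * m) := by
          apply mul_le_mul_of_nonneg_left _ hδ0.le
          exact Real.exp_le_exp.mpr (mul_le_mul_of_nonneg_left hsm K.2)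
        have h4 : δ * Real.exp (K * m) = r := by
          rw [hδ_def, mul_assoc, ← Real.exp_add]
          simp
        linarith
      set Sn : Set ℝ := {t : ℝ | 0 ≤ t ∧ φ t x ∉ Metric.ball p r} with hSn_def
      have hSnclosed : IsClosed Sn := by
        have : Sn = Set.Ici (0:ℝ) ∩ (fun t => φ t x) ⁻¹' (Metric.ball p r)ᶜ := rfl
        rw [this]
        exact isClosed_Ici.inter (Metric.isOpen_ball.isClosed_compl.preimage (hφcontT x))
      have hSnne : Sn.Nonempty := by
        have hxq : Tendsto (fun t => φ t x) atTop (𝓝 q) := by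
          rw [hW] at hxW; exact hxW.2
        have hev : ∀ᶠ t in atTop, dist (φ t x) q < dist p q - r := by
          have := Metric.tendsto_nhds.mp hxq (dist p q - r) (by linarith)
          exact this
        obtain ⟨t0, ht0⟩ := (hev.and (eventually_ge_atTop (0:ℝ))).exists
        refine ⟨t0, ht0.2, ?_⟩
        intro hmem
        rw [Metric.mem_ball] at hmem
        have := dist_triangle p (φ t0 x) q
        rw [dist_comm p (φ t0 x)] at this
        linarith [ht0.1]
      have hSnbdd : BddBelow Sn := ⟨0, fun t ht => ht.1⟩
      set T : ℝ := sInf Sn with hT_def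
      have hTmem : T ∈ Sn := hSnclosed.csInf_mem hSnne hSnbdd
      have hTge : m ≤ T := by
        apply le_csInf hSnne
        intro t ht
        by_contra hc
        push_neg at hc
        exact ht.2 (hball t ht.1 hc.le)
      have hTpos : 0 < T := lt_of_lt_of_le hm0 hTge
      have hTless : ∀ s : ℝ, 0 ≤ s → s < T → φ s x ∈ Metric.ball p r := by
        intro s hs0 hsT
        by_contra hc
        exact absurd (csInf_le hSnbdd ⟨hs0, hc⟩) (not_le.mpr hsT)
      refine ⟨φ T x, hWinv x hxW T, ?_, ?_, T, by linarith, ?_⟩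
      · have htd : Tendsto (fun s => φ s x) (𝓝[<] T) (𝓝 (φ T x)) :=
          ((hφcontT x).tendsto T).mono_left nhdsWithin_le_nhds
        have hev : ∀ᶠ s in 𝓝[<] T, φ s x ∈ Metric.ball p r := by
          filter_upwards [Ioo_mem_nhdsLT_of_mem (Set.mem_Ioc.mpr ⟨hTpos, le_rfl⟩)] with s hs
          exact hTless s hs.1.le hs.2
        have := mem_closure_of_tendsto htd hev
        rwa [closure_ball p hr0.ne'] at this
      · have := hTmem.2
        rw [Metric.mem_ball, not_lt] at this
        exact this
      · intro s hs0 hsT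
        rw [hgrp T (-s) x]
        rcases eq_or_lt_of_le hs0 with h | h
        · rw [← h]
          have htd : Tendsto (fun s => φ s x) (𝓝[<] T) (𝓝 (φ T x)) :=
            ((hφcontT x).tendsto T).mono_left nhdsWithin_le_nhds
          have hev : ∀ᶠ u in 𝓝[<] T, φ u x ∈ Metric.ball p r := by
            filter_upwards [Ioo_mem_nhdsLT_of_mem (Set.mem_Ioc.mpr ⟨hTpos, le_rfl⟩)] with u hu
            exact hTless u hu.1.le hu.2
          have := mem_closure_of_tendsto htd hev
          rw [closure_ball p hr0.ne'] at this
          simpa using this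
        · apply Metric.ball_subset_closedBall
          exact hTless (-s + T) (by linarith) (by linarith)
    choose yseq hyWs hyballs hydists Tseq hTges hbacks using hstep
    obtain ⟨y, hyball', σ, hσmono, hσtend⟩ := (isCompact_closedBall p r).tendsto_subseq hyballs
    refine ⟨y, ?_, ?_, hyball', ?_⟩
    · exact mem_closure_of_tendsto hσtend
        (Eventually.of_forall fun k => (hyWs (σ k) : (yseq ∘ σ) k ∈ W))
    · have h1 : Tendsto (fun k => dist (yseq (σ k)) p) atTop (𝓝 (dist y p)) :=
        ((continuous_id.dist continuous_const).tendsto y).comp hσtend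
      exact ge_of_tendsto h1 (Eventually.of_forall fun k => hydists (σ k))
    · intro s hs0
      have htd : Tendsto (fun k => φ (-s) (yseq (σ k))) atTop (𝓝 (φ (-s) y)) :=
        ((hcont (-s)).tendsto y).comp hσtend
      apply (Metric.isClosed_closedBall (x := p) (ε := r)).mem_of_tendsto htd
      filter_upwards [eventually_ge_atTop ⌈s⌉₊] with k hk
      apply hbacks (σ k) s hs0
      calc s ≤ (⌈s⌉₊ : ℝ) := Nat.le_ceil s
        _ ≤ (k : ℝ) := Nat.cast_le.mpr hk
        _ ≤ (σ k : ℝ) := Nat.cast_le.mpr (hσmono.le_apply)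
        _ ≤ Tseq (σ k) := hTges (σ k)

  -- y is not critical
  have hync : gradient f y ≠ 0 := by
    intro h0
    have := hiso y hyball h0
    rw [this] at hydist
    simp at hydist
    exact absurd (le_antisymm hydist hr0.le) (by simp [hr0.ne'])
  refine ⟨y, hyW, hync, ?_⟩
  -- the energy along the backward orbit
  set g : ℝ → ℝ := fun s => f (φ (-s) y) with hg_def
  have hgderiv : ∀ s : ℝ, HasDerivAt g (‖gradient f (φ (-s) y)‖ ^ 2) s := by
    intro s
    have h1 := (hfphi y (-s)).comp s (hasDerivAt_neg s)
    refine h1.congr_deriv ?_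
    ring
  have hgmono : Monotone g :=
    monotone_of_deriv_nonneg (fun s => (hgderiv s).differentiableAt)
      (fun s => by rw [(hgderiv s).deriv]; positivity)
  obtain ⟨C2, hC2⟩ : ∃ C2 : ℝ, ∀ z ∈ Metric.closedBall p r, f z ≤ C2 := by
    obtain ⟨C2, hC2⟩ := (isCompact_closedBall p r).exists_bound_of_continuousOn
      (hf.continuous.continuousOn (s := Metric.closedBall p r))
    exact ⟨C2, fun z hz => (le_abs_self _).trans ((Real.norm_eq_abs _ ▸ hC2 z hz))⟩
  have hgbdd : BddAbove (Set.range g) := by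
    refine ⟨C2, fun v hv => ?_⟩
    obtain ⟨s, rfl⟩ := hv
    rcases le_or_gt 0 s with hs | hs
    · exact hC2 _ (hyback s hs)
    · calc g s ≤ g 0 := hgmono hs.le
        _ ≤ C2 := by
          have := hyback 0 le_rfl
          rw [neg_zero] at this
          simpa [hg_def] using hC2 _ this
  set L : ℝ := ⨆ s, g s with hL_def
  have hgL : Tendsto g atTop (𝓝 L) := tendsto_atTop_ciSup hgmono hgbdd
  -- final argument by contradiction
  rw [Metric.tendsto_nhds]
  by_contra hcon
  push_neg at hcon
  obtain ⟨ε, hε0, hfreq⟩ := hcon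
  -- extract a sequence going to -∞ staying ε-away from p
  have hseq : ∀ n : ℕ, ∃ t : ℝ, t ≤ -(n : ℝ) ∧ ε ≤ dist (φ t y) p := by
    intro n
    have := (frequently_atBot.mp hfreq) (-(n:ℝ))
    obtain ⟨t, ht1, ht2⟩ := this
    exact ⟨t, ht1, ht2⟩
  choose u hu1 hu2 using hseq
  have huball : ∀ n : ℕ, φ (u n) y ∈ Metric.closedBall p r := by
    intro n
    have h1 : (0:ℝ) ≤ -(u n) := by
      have h2 := hu1 n
      have h3 : (0:ℝ) ≤ (n:ℝ) := Nat.cast_nonneg n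
      linarith
    have := hyback (-(u n)) h1
    rwa [neg_neg] at this
  obtain ⟨z, hzball, τ, hτmono, hτtend⟩ :=
    (isCompact_closedBall p r).tendsto_subseq huball
  have hzp : ε ≤ dist z p := by
    have h1 : Tendsto (fun j => dist (φ (u (τ j)) y) p) atTop (𝓝 (dist z p)) :=
      (Continuous.dist (continuous_id) (continuous_const)).continuousAt.tendsto.comp hτtend
    exact le_of_tendsto_of_tendsto' tendsto_const_nhds h1 (fun j => hu2 (τ j))
  -- f is constant equal to L along the whole orbit of z
  have hutend : Tendsto (fun j => u (τ j)) atTop atBot := by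
    refine tendsto_atBot_mono (fun j => hu1 (τ j)) ?_
    refine tendsto_neg_atBot_iff.mpr ?_
    exact tendsto_natCast_atTop_atTop.comp hτmono.tendsto_atTop
  have hconst : ∀ t : ℝ, f (φ t z) = L := by
    intro t
    have h1 : Tendsto (fun j => φ (t + u (τ j)) y) atTop (𝓝 (φ t z)) := by
      have := ((hcont t).tendsto z).comp hτtend
      refine this.congr fun j => ?_
      exact hgrp (u (τ j)) t y
    have h2 : Tendsto (fun j => f (φ (t + u (τ j)) y)) atTop (𝓝 (f (φ t z))) :=
      (hf.continuous.tendsto _).comp h1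
    have h3 : Tendsto (fun j => g (-(t + u (τ j)))) atTop (𝓝 L) := by
      refine hgL.comp ?_
      refine tendsto_neg_atTop_iff.mpr ?_
      exact tendsto_atBot_add_const_left _ t hutend
    have h4 : (fun j => g (-(t + u (τ j)))) = fun j => f (φ (t + u (τ j)) y) := by
      funext j; simp [hg_def]
    rw [h4] at h3
    exact tendsto_nhds_unique h2 h3
  have hzcrit : gradient f z = 0 := by
    have hF : HasDerivAt (fun t : ℝ => f (φ t z)) (-‖gradient f (φ 0 z)‖ ^ 2) 0 := hfphi z 0
    have hFc : HasDerivAt (fun _ : ℝ => L) (-‖gradient f (φ 0 z)‖ ^ 2) 0 := by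
      refine hF.congr_of_eventuallyEq ?_
      exact Filter.Eventually.of_forall fun t => (hconst t).symm
    have := (hasDerivAt_const (0:ℝ) L).unique hFc
    have hn : ‖gradient f (φ 0 z)‖ ^ 2 = 0 := by linarith
    rw [hφ0 z] at hn
    simpa using hn
  have := hiso z hzball hzcrit
  rw [this] at hzp
  simp at hzp
  linarith
end

section
/- Any two critical points p, q of a Morse function f on a compact connected Riemannian manifold are connected by a broken orbit: there exist critical points p_1 = p, p_2, ..., p_n = q such that for each i, either some flow line of the negative gradient flow goes from p_i to p_{i+1}, or from p_{i+1} to p_i. -/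
open Filter Topology

section BrokenOrbitAux

variable {E : Type*} [NormedAddCommGroup E] [InnerProductSpace ℝ E] [FiniteDimensional ℝ E]
variable {f : E → ℝ} {φ : ℝ → E → E} {M : Set E}

lemma aux_grad_contDiff (hf : ContDiff ℝ (⊤ : ℕ∞) f) : ContDiff ℝ (⊤ : ℕ∞) (gradient f) := by
  have h1 : ContDiff ℝ (⊤ : ℕ∞) (fderiv ℝ f) := hf.fderiv_right (by simp)
  exact ((InnerProductSpace.toDual ℝ E).symm.contDiff).comp h1

lemma aux_gradient_neg (f : E → ℝ) (x : E) :
    gradient (fun y => -(f y)) x = -(gradient f x) := by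
  show (InnerProductSpace.toDual ℝ E).symm (fderiv ℝ (fun y => -(f y)) x)
      = -((InnerProductSpace.toDual ℝ E).symm (fderiv ℝ f x))
  rw [fderiv_fun_neg, map_neg]

lemma aux_deriv_along (hf : ContDiff ℝ (⊤ : ℕ∞) f)
    (hφ : ∀ x t, HasDerivAt (fun s => φ s x) (-(gradient f (φ t x))) t) (x : E) (t : ℝ) :
    HasDerivAt (fun s => f (φ s x)) (-‖gradient f (φ t x)‖ ^ 2) t := by
  have hd := ((hf.differentiable (by simp)).differentiableAt (x := φ t x)).hasFDerivAt
  have h := hd.comp_hasDerivAt t (hφ x t)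
  refine h.congr_deriv ?_
  have : fderiv ℝ f (φ t x) = InnerProductSpace.toDual ℝ E (gradient f (φ t x)) := by
    simp [gradient]
  rw [this, InnerProductSpace.toDual_apply_apply, inner_neg_right, real_inner_self_eq_norm_sq]

lemma aux_anti (hf : ContDiff ℝ (⊤ : ℕ∞) f)
    (hφ : ∀ x t, HasDerivAt (fun s => φ s x) (-(gradient f (φ t x))) t) (x : E) :
    Antitone (fun t => f (φ t x)) := by
  apply antitone_of_deriv_nonpos
  · exact fun t => (aux_deriv_along hf hφ x t).differentiableAt
  · intro t
    rw [(aux_deriv_along hf hφ x t).deriv]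
    exact neg_nonpos.mpr (sq_nonneg _)

lemma aux_strict (hf : ContDiff ℝ (⊤ : ℕ∞) f)
    (hφ0 : ∀ x, φ 0 x = x)
    (hφ : ∀ x t, HasDerivAt (fun s => φ s x) (-(gradient f (φ t x))) t)
    {x : E} (hx : gradient f x ≠ 0) : f (φ 1 x) < f x := by
  by_contra hcon
  push_neg at hcon
  have anti := aux_anti hf hφ x
  have h0 : f (φ 0 x) = f x := by rw [hφ0]
  have heq : ∀ t ∈ Set.Icc (0:ℝ) 1, f (φ t x) = f x := by
    intro t ht
    have h1 : f (φ t x) ≤ f (φ 0 x) := anti ht.1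
    have h2 : f (φ 1 x) ≤ f (φ t x) := anti ht.2
    rw [h0] at h1
    linarith
  have hder := aux_deriv_along hf hφ x 0
  rw [hasDerivAt_iff_tendsto_slope] at hder
  have hneg : -‖gradient f (φ 0 x)‖ ^ 2 < 0 := by
    rw [hφ0]
    exact neg_lt_zero.mpr (pow_pos (norm_pos_iff.mpr hx) 2)
  have hder' : Tendsto (slope (fun s => f (φ s x)) 0) (𝓝[>] 0) (𝓝 (-‖gradient f (φ 0 x)‖ ^ 2)) :=
    hder.mono_left (nhdsWithin_mono _ (fun t ht => ne_of_gt ht))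
  have hev : ∀ᶠ t in 𝓝[>] (0:ℝ), slope (fun s => f (φ s x)) 0 t < 0 :=
    hder'.eventually_lt_const hneg
  have hev2 : ∀ᶠ t in 𝓝[>] (0:ℝ), t ∈ Set.Ioo (0:ℝ) 1 :=
    Ioo_mem_nhdsGT_of_mem ⟨le_refl _, one_pos⟩
  obtain ⟨t, ht1, ht2⟩ := (hev.and hev2).exists
  have : slope (fun s => f (φ s x)) 0 t = 0 := by
    have ht : f (φ t x) = f x := heq t ⟨le_of_lt ht2.1, le_of_lt ht2.2⟩
    rw [slope_def_field]
    show (f (φ t x) - f (φ 0 x)) / (t - 0) = 0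
    rw [ht, h0, sub_self, zero_div]
  linarith [this ▸ ht1]

lemma aux_sep {s : Set E} (hs : s.Finite) :
    ∃ ε : ℝ, 0 < ε ∧ ∀ a ∈ s, ∀ b ∈ s, a ≠ b → 2 * ε < dist a b := by
  set T : Set ℝ := {d : ℝ | ∃ a ∈ s, ∃ b ∈ s, a ≠ b ∧ d = dist a b} with hT
  have hTfin : T.Finite := by
    apply ((hs.prod hs).image (fun p : E × E => dist p.1 p.2)).subset
    rintro d ⟨a, ha, b, hb, -, rfl⟩
    exact ⟨(a, b), ⟨ha, hb⟩, rfl⟩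
  rcases T.eq_empty_or_nonempty with hTe | hTne
  · refine ⟨1, one_pos, fun a ha b hb hab => ?_⟩
    exact absurd (show (dist a b) ∈ T from ⟨a, ha, b, hb, hab, rfl⟩) (by simp [hTe])
  · obtain ⟨d0, hd0T, hmin⟩ := Set.exists_min_image T id hTfin hTne
    obtain ⟨a, ha, b, hb, hab, rfl⟩ := hd0T
    have hpos : 0 < dist a b := dist_pos.mpr hab
    refine ⟨dist a b / 3, by linarith, fun a' ha' b' hb' hab' => ?_⟩
    have : dist a b ≤ dist a' b' := hmin _ ⟨a', ha', b', hb', hab', rfl⟩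
    linarith

lemma aux_gronwall
    (hφ : ∀ x t, HasDerivAt (fun s => φ s x) (-(gradient f (φ t x))) t)
    {K : Set E} {L : ℝ}
    (hlip : ∀ y ∈ K, ∀ z ∈ K, ‖gradient f y - gradient f z‖ ≤ L * ‖y - z‖)
    {c : E} (hc : gradient f c = 0) (hcK : c ∈ K)
    {x : E} (htraj : ∀ t, φ t x ∈ K) {a b : ℝ} (hab : a ≤ b) :
    ‖φ b x - c‖ ≤ ‖φ a x - c‖ * Real.exp (L * (b - a)) := by
  have hcont : Continuous fun t => φ t x - c := by
    rw [continuous_iff_continuousAt]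
    exact fun t => ((hφ x t).sub_const c).continuousAt
  have key := norm_le_gronwallBound_of_norm_deriv_right_le
    (f := fun t => φ t x - c) (f' := fun t => -(gradient f (φ t x)))
    (δ := ‖φ a x - c‖) (K := L) (ε := 0) (a := a) (b := b)
    (hcont.continuousOn)
    (fun t _ => ((hφ x t).sub_const c).hasDerivWithinAt)
    (le_refl _)
    (fun t _ => by
      rw [norm_neg]
      have h1 : gradient f (φ t x) = gradient f (φ t x) - gradient f c := by
        rw [hc, sub_zero]
      rw [h1, add_zero]
      exact hlip _ (htraj t) _ hcK)
  have := key b ⟨hab, le_refl _⟩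
  rwa [gronwallBound_ε0] at this

lemma aux_limit_fixed (hφ0 : ∀ x, φ 0 x = x)
    (hφ : ∀ x t, HasDerivAt (fun s => φ s x) (-(gradient f (φ t x))) t)
    (hgrp : ∀ s t : ℝ, ∀ x : E, φ t (φ s x) = φ (t + s) x)
    (hcont : ∀ t : ℝ, Continuous (φ t))
    {x a : E} {l : Filter ℝ} [l.NeBot]
    (hshift : ∀ s : ℝ, Tendsto (fun t : ℝ => t + s) l l)
    (hx : Tendsto (fun t => φ t x) l (𝓝 a)) :
    (∀ s, φ s a = a) ∧ gradient f a = 0 := by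
  have hfix : ∀ s, φ s a = a := by
    intro s
    have h1 : Tendsto (fun t => φ s (φ t x)) l (𝓝 (φ s a)) :=
      ((hcont s).tendsto a).comp hx
    have h2 : (fun t => φ s (φ t x)) = fun t => φ (s + t) x := by
      funext t
      rw [hgrp t s x, add_comm]
    have h3 : Tendsto (fun t => φ (s + t) x) l (𝓝 a) := by
      have := hx.comp (hshift s)
      convert this using 2 with t
      simp [add_comm]
    rw [h2] at h1
    exact tendsto_nhds_unique h1 h3
  refine ⟨hfix, ?_⟩
  have hconst : (fun s => φ s a) = fun _ => a := funext hfix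
  have hd := hφ a 0
  rw [hconst] at hd
  have := (hasDerivAt_const (0:ℝ) a).unique hd
  rw [hφ0 a] at this
  rw [← neg_eq_zero, this]

lemma aux_omega (hf : ContDiff ℝ (⊤ : ℕ∞) f) (hM : IsCompact M)
    (hφ0 : ∀ x, φ 0 x = x)
    (hφ : ∀ x t, HasDerivAt (fun s => φ s x) (-(gradient f (φ t x))) t)
    (hgrp : ∀ s t : ℝ, ∀ x : E, φ t (φ s x) = φ (t + s) x)
    (hcont : ∀ t : ℝ, Continuous (φ t))
    (hinv : ∀ x ∈ M, ∀ t : ℝ, φ t x ∈ M)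
    (hfin : {y ∈ M | gradient f y = 0}.Finite)
    {x : E} (hx : x ∈ M) :
    ∃ c, Tendsto (fun t => φ t x) atTop (𝓝 c) := by
  classical
  set CM := {y ∈ M | gradient f y = 0} with hCM
  set u : ℝ → E := fun t => φ t x with hu
  have hucont : Continuous u := continuous_iff_continuousAt.mpr (fun t => (hφ x t).continuousAt)
  have huM : ∀ t, u t ∈ M := fun t => hinv x hx t
  obtain ⟨m0, hm0M, hm0⟩ := hM.exists_isMinOn ⟨x, hx⟩ hf.continuous.continuousOn
  have hbdd : BddBelow (Set.range fun t => f (u t)) :=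
    ⟨f m0, by rintro y ⟨t, rfl⟩; exact hm0 (huM t)⟩
  have anti : Antitone fun t => f (u t) := aux_anti hf hφ x
  set ℓ := ⨅ t : ℝ, f (u t) with hℓdef
  have hℓ : Tendsto (fun t => f (u t)) atTop (𝓝 ℓ) := tendsto_atTop_ciInf anti hbdd
  have hge : ∀ t, ℓ ≤ f (u t) := fun t => ciInf_le hbdd t
  have claim2 : ∀ z, ClusterPt z (map u atTop) → z ∈ CM := by
    intro z hz
    have hseq : ∀ n : ℕ, ∃ t : ℝ, (n : ℝ) ≤ t ∧ dist (u t) z < 1 / (n + 1) := by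
      intro n
      have h1 : Metric.ball z (1 / (n + 1 : ℝ)) ∈ 𝓝 z := Metric.ball_mem_nhds _ (by positivity)
      have h2 : u '' Set.Ici (n : ℝ) ∈ map u atTop := image_mem_map (Ici_mem_atTop _)
      obtain ⟨y, hy1, hy2⟩ := (Filter.inf_neBot_iff.mp hz h1 h2)
      obtain ⟨t, ht, rfl⟩ := hy2
      exact ⟨t, ht, by simpa [dist_comm] using hy1⟩
    choose ts hts1 hts2 using hseq
    have hts3 : Tendsto ts atTop atTop :=
      tendsto_atTop_mono hts1 tendsto_natCast_atTop_atTop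
    have huz : Tendsto (fun n => u (ts n)) atTop (𝓝 z) := by
      rw [tendsto_iff_dist_tendsto_zero]
      exact squeeze_zero (fun n => dist_nonneg) (fun n => le_of_lt (hts2 n))
        tendsto_one_div_add_atTop_nhds_zero_nat
    have hzM : z ∈ M := hM.isClosed.mem_of_tendsto huz (Eventually.of_forall fun n => huM _)
    have hfz : f z = ℓ :=
      tendsto_nhds_unique ((hf.continuous.tendsto z).comp huz) (hℓ.comp hts3)
    refine ⟨hzM, ?_⟩
    by_contra hcrit
    have hlt : f (φ 1 z) < f z := aux_strict hf hφ0 hφ hcrit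
    have h1 : Tendsto (fun n => φ 1 (u (ts n))) atTop (𝓝 (φ 1 z)) :=
      ((hcont 1).tendsto z).comp huz
    have h2 : (fun n => φ 1 (u (ts n))) = fun n => u (1 + ts n) :=
      funext fun n => hgrp (ts n) 1 x
    rw [h2] at h1
    have h4 : Tendsto (fun n => f (u (1 + ts n))) atTop (𝓝 (f (φ 1 z))) :=
      (hf.continuous.tendsto _).comp h1
    have h5 : ℓ ≤ f (φ 1 z) := ge_of_tendsto h4 (Eventually.of_forall fun n => hge _)
    rw [hfz] at hlt
    linarith
  have claim1 : ∀ ε : ℝ, 0 < ε → ∀ᶠ t in atTop, ∃ c ∈ CM, dist (u t) c < ε := by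
    intro ε hε
    by_contra hcon
    rw [Filter.not_eventually] at hcon
    set K' := M ∩ {y | ∀ c ∈ CM, ε ≤ dist y c} with hK'
    have hK'closed : IsClosed {y : E | ∀ c ∈ CM, ε ≤ dist y c} := by
      have : {y : E | ∀ c ∈ CM, ε ≤ dist y c} = ⋂ c ∈ CM, {y | ε ≤ dist y c} := by
        ext y; simp
      rw [this]
      exact isClosed_biInter fun c _ =>
        isClosed_le continuous_const (continuous_id.dist continuous_const)
    have hK'c : IsCompact K' := hM.inter_right hK'closed
    have hfreq : ∃ᶠ t in atTop, u t ∈ K' := by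
      refine hcon.mono fun t ht => ⟨huM t, fun c hc => ?_⟩
      by_contra hlt
      exact ht ⟨c, hc, not_le.mp hlt⟩
    haveI hne : NeBot (atTop ⊓ 𝓟 {t | u t ∈ K'}) := frequently_iff_neBot.mp hfreq
    have hle : map u (atTop ⊓ 𝓟 {t | u t ∈ K'}) ≤ 𝓟 K' := by
      rw [le_principal_iff, mem_map]
      exact mem_inf_of_right (mem_principal_self _)
    obtain ⟨z, hzK', hz⟩ := hK'c.exists_clusterPt hle
    have hz2 : ClusterPt z (map u atTop) := hz.mono (map_mono inf_le_left)
    have hzCM := claim2 z hz2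
    have := hzK'.2 z hzCM
    simp at this
    linarith
  obtain ⟨ε₀, hε₀, hsep⟩ := aux_sep hfin
  obtain ⟨T, hT⟩ := eventually_atTop.mp (claim1 ε₀ hε₀)
  obtain ⟨cs, hcsCM, hcs⟩ := hT T (le_refl T)
  have hball : ∀ t, T ≤ t → dist (u t) cs < ε₀ := by
    intro t ht
    by_contra hcon
    set U := u ⁻¹' (Metric.ball cs ε₀) with hU
    set V := u ⁻¹' (⋃ c ∈ CM \ {cs}, Metric.ball c ε₀) with hV
    have hUo : IsOpen U := Metric.isOpen_ball.preimage hucont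
    have hVo : IsOpen V := (isOpen_biUnion fun c _ => Metric.isOpen_ball).preimage hucont
    have hcover : Set.Ici T ⊆ U ∪ V := by
      intro s hs
      obtain ⟨c, hcCM, hc⟩ := hT s hs
      by_cases hcc : c = cs
      · left; rw [hU]; simp only [Set.mem_preimage, Metric.mem_ball]; rw [← hcc]; exact hc
      · right
        simp only [hV, Set.mem_preimage, Set.mem_iUnion]
        exact ⟨c, ⟨hcCM, hcc⟩, by simpa using hc⟩
    have htV : t ∈ V := by
      rcases hcover ht with h | h
      · exact absurd (by simpa [hU] using h) hcon
      · exact h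
    obtain ⟨s, hs1, hs2, hs3⟩ :=
      isPreconnected_Ici U V hUo hVo hcover ⟨T, Set.self_mem_Ici, by
        rw [hU]; simpa using hcs⟩ ⟨t, ht, htV⟩
    simp only [hU, hV, Set.mem_preimage, Metric.mem_ball, Set.mem_iUnion] at hs2 hs3
    obtain ⟨c, ⟨hcCM, hcc⟩, hc⟩ := hs3
    have h1 := hsep c hcCM cs hcsCM (by simpa using hcc)
    have h2 : dist c cs ≤ dist (u s) c + dist (u s) cs := dist_triangle_left _ _ _
    linarith
  refine ⟨cs, ?_⟩
  rw [Metric.tendsto_nhds]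
  intro ε hε
  filter_upwards [claim1 (min ε ε₀) (lt_min hε hε₀), eventually_ge_atTop T] with t ht hTt
  obtain ⟨c, hcCM, hc⟩ := ht
  have hc2 : c = cs := by
    by_contra hne
    have h1 := hsep c hcCM cs hcsCM hne
    have h2 : dist c cs ≤ dist (u t) c + dist (u t) cs := dist_triangle_left _ _ _
    have h3 := hball t hTt
    have h4 : dist (u t) c < ε₀ := lt_of_lt_of_le hc (min_le_right _ _)
    linarith
  rw [hc2] at hc
  exact lt_of_lt_of_le hc (min_le_left _ _)

lemma aux_fin (hf : ContDiff ℝ (⊤ : ℕ∞) f)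
    (hMorse : ∀ y : E, gradient f y = 0 → Function.Bijective (fderiv ℝ (gradient f) y))
    (hM : IsCompact M) : {y ∈ M | gradient f y = 0}.Finite := by
  have hgc : ContDiff ℝ (⊤ : ℕ∞) (gradient f) := aux_grad_contDiff hf
  set Z := {y ∈ M | gradient f y = 0} with hZ
  have hZeq : Z = M ∩ gradient f ⁻¹' {0} := by ext y; simp [hZ]
  have hZcl : IsClosed Z := by
    rw [hZeq]
    exact hM.isClosed.inter (isClosed_singleton.preimage hgc.continuous)
  have hZcomp : IsCompact Z := hM.of_isClosed_subset hZcl (fun y hy => hy.1)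
  apply hZcomp.finite
  rw [isDiscrete_iff_discreteTopology, discreteTopology_subtype_iff]
  intro c hc
  have hbij := hMorse c hc.2
  set D := fderiv ℝ (gradient f) c with hD
  let eD : E ≃L[ℝ] E :=
    LinearEquiv.toContinuousLinearEquiv (LinearEquiv.ofBijective (D : E →ₗ[ℝ] E) hbij)
  have hsd : HasStrictFDerivAt (gradient f) (eD : E →L[ℝ] E) c := by
    have h1 : HasStrictFDerivAt (gradient f) D c :=
      hgc.contDiffAt.hasStrictFDerivAt (by simp)
    have h2 : (eD : E →L[ℝ] E) = D := by ext v; rfl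
    rwa [h2]
  have hco : c ∈ (hsd.toOpenPartialHomeomorph _).source := hsd.mem_toOpenPartialHomeomorph_source
  have hop : IsOpen (hsd.toOpenPartialHomeomorph _).source := (hsd.toOpenPartialHomeomorph _).open_source
  have hinj : Set.InjOn (gradient f) (hsd.toOpenPartialHomeomorph _).source := by
    have := (hsd.toOpenPartialHomeomorph _).injOn
    rwa [hsd.toOpenPartialHomeomorph_coe] at this
  rw [inf_principal_eq_bot]
  have hmem : (hsd.toOpenPartialHomeomorph _).source \ {c} ∈ 𝓝[≠] c := by
    rw [nhdsWithin]
    exact Filter.inter_mem (mem_inf_of_left (hop.mem_nhds hco))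
      (mem_inf_of_right (mem_principal_self _))
  refine mem_of_superset hmem ?_
  rintro z ⟨hz1, hz2⟩ hzZ
  exact hz2 (hinj hz1 hco (by rw [hzZ.2, hc.2]))

end BrokenOrbitAux

/-- Any two critical points `p, q` of a Morse function on a compact connected manifold
are connected by a broken orbit: there are critical points `p_1 = p, …, p_n = q` such
that consecutive ones are joined by a flow line of the negative gradient flow, in one
direction or the other. -/
theorem stmt8
    {E : Type*} [NormedAddCommGroup E] [InnerProductSpace ℝ E] [FiniteDimensional ℝ E]
    (f : E → ℝ) (hf : ContDiff ℝ (⊤ : ℕ∞) f)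
    (hMorse : ∀ y : E, gradient f y = 0 → Function.Bijective (fderiv ℝ (gradient f) y))
    (M : Set E) (hM : IsCompact M) (hMconn : IsConnected M)
    (φ : ℝ → E → E)
    (hφ0 : ∀ x, φ 0 x = x)
    (hφ : ∀ x t, HasDerivAt (fun s => φ s x) (-(gradient f (φ t x))) t)
    (hgrp : ∀ s t : ℝ, ∀ x : E, φ t (φ s x) = φ (t + s) x)
    (hcont : ∀ t : ℝ, Continuous (φ t))
    (hinv : ∀ x ∈ M, ∀ t : ℝ, φ t x ∈ M)
    (p q : E) (hp : p ∈ M) (hq : q ∈ M)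
    (hpcrit : gradient f p = 0) (hqcrit : gradient f q = 0) :
    ∃ n : ℕ, ∃ c : Fin (n + 1) → E,
      c 0 = p ∧ c (Fin.last n) = q ∧
      (∀ i, c i ∈ M ∧ gradient f (c i) = 0) ∧
      ∀ i : Fin n,
        (∃ x ∈ M, Tendsto (fun t => φ t x) atBot (𝓝 (c i.castSucc)) ∧
            Tendsto (fun t => φ t x) atTop (𝓝 (c i.succ))) ∨
        (∃ x ∈ M, Tendsto (fun t => φ t x) atBot (𝓝 (c i.succ)) ∧
            Tendsto (fun t => φ t x) atTop (𝓝 (c i.castSucc))) := by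
  classical
  have hgc : ContDiff ℝ (⊤ : ℕ∞) (gradient f) := aux_grad_contDiff hf
  set CM := {y ∈ M | gradient f y = 0} with hCMdef
  have hfin : CM.Finite := aux_fin hf hMorse hM
  -- a convex compact set containing M, on which the gradient is Lipschitz
  obtain ⟨R, hMR⟩ := hM.isBounded.subset_closedBall 0
  set K := Metric.closedBall (0:E) R with hKdef
  have hKconv : Convex ℝ K := convex_closedBall _ _
  have hKcomp : IsCompact K := isCompact_closedBall _ _
  have hdiffK : ∀ y ∈ K, DifferentiableAt ℝ (gradient f) y :=
    fun y _ => (hgc.differentiable (by simp)).differentiableAt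
  have hfdc : Continuous (fderiv ℝ (gradient f)) := (hgc.fderiv_right (m := (⊤ : ℕ∞)) (by simp)).continuous
  obtain ⟨C, hC⟩ := hKcomp.exists_bound_of_continuousOn hfdc.continuousOn
  set L : ℝ := max C 1 with hLdef
  have hL1 : (1:ℝ) ≤ L := le_max_right _ _
  have hLpos : (0:ℝ) < L := lt_of_lt_of_le one_pos hL1
  have hlipsch : LipschitzOnWith (Real.toNNReal L) (gradient f) K := by
    apply hKconv.lipschitzOnWith_of_nnnorm_fderiv_le hdiffK
    intro y hy
    rw [← NNReal.coe_le_coe, coe_nnnorm, Real.coe_toNNReal _ (le_of_lt hLpos)]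
    exact le_trans (hC y hy) (le_max_left _ _)
  have hlip : ∀ y ∈ K, ∀ z ∈ K, ‖gradient f y - gradient f z‖ ≤ L * ‖y - z‖ := by
    intro y hy z hz
    have h := hlipsch.dist_le_mul y hy z hz
    rwa [dist_eq_norm, dist_eq_norm, Real.coe_toNNReal _ (le_of_lt hLpos)] at h
  have htrajK : ∀ x ∈ M, ∀ t : ℝ, φ t x ∈ K := fun x hx t => hMR (hinv x hx t)
  have hgron : ∀ x ∈ M, ∀ c ∈ CM, ∀ a b : ℝ, a ≤ b →
      ‖φ b x - c‖ ≤ ‖φ a x - c‖ * Real.exp (L * (b - a)) :=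
    fun x hx c hc a b hab => aux_gronwall hφ hlip hc.2 (hMR hc.1) (htrajK x hx) hab
  -- critical points are fixed in forward time
  have hfix : ∀ c ∈ CM, ∀ t : ℝ, 0 ≤ t → φ t c = c := by
    intro c hc t ht
    have h := hgron c hc.1 c hc 0 t ht
    rw [hφ0, sub_self, norm_zero, zero_mul] at h
    have := norm_eq_zero.mp (le_antisymm h (norm_nonneg _))
    exact sub_eq_zero.mp this
  have hfixtend : ∀ c ∈ CM, Tendsto (fun t => φ t c) atTop (𝓝 c) := by
    intro c hc
    have hev : ∀ᶠ t in atTop, φ t c = c := by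
      filter_upwards [eventually_ge_atTop (0:ℝ)] with t ht
      exact hfix c hc t ht
    exact Tendsto.congr' (hev.mono fun t h => h.symm) tendsto_const_nhds
  have hshiftT : ∀ s : ℝ, Tendsto (fun t : ℝ => t + s) atTop atTop :=
    fun s => tendsto_atTop_add_const_right atTop s tendsto_id
  have hshiftB : ∀ s : ℝ, Tendsto (fun t : ℝ => t + s) atBot atBot :=
    fun s => tendsto_atBot_add_const_right atBot s tendsto_id
  -- the omega-limit map
  have homega : ∀ x : E, ∃ c, x ∈ M → ((c ∈ M ∧ gradient f c = 0) ∧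
      Tendsto (fun t => φ t x) atTop (𝓝 c)) := by
    intro x
    by_cases hx : x ∈ M
    · obtain ⟨c, hc⟩ := aux_omega hf hM hφ0 hφ hgrp hcont hinv hfin hx
      have hc2 := aux_limit_fixed hφ0 hφ hgrp hcont hshiftT hc
      have hcM : c ∈ M := hM.isClosed.mem_of_tendsto hc
        (Eventually.of_forall fun t => hinv x hx t)
      exact ⟨c, fun _ => ⟨⟨hcM, hc2.2⟩, hc⟩⟩
    · exact ⟨x, fun h => absurd h hx⟩
  choose ω hω using homega
  -- the alpha-limit existence, via the reversed flow
  have halpha : ∀ x ∈ M, ∃ a, (a ∈ M ∧ gradient f a = 0) ∧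
      Tendsto (fun t => φ t x) atBot (𝓝 a) := by
    intro x hx
    set f' : E → ℝ := fun y => -(f y) with hf'def
    set ψ : ℝ → E → E := fun t y => φ (-t) y with hψdef
    have hψ0 : ∀ y, ψ 0 y = y := by intro y; show φ (-0) y = y; rw [neg_zero, hφ0]
    have hgrad' : ∀ y, gradient f' y = -(gradient f y) := fun y => aux_gradient_neg f y
    have hψ : ∀ y t, HasDerivAt (fun s => ψ s y) (-(gradient f' (ψ t y))) t := by
      intro y t
      have h1 : HasDerivAt (fun s : ℝ => -s) (-1 : ℝ) t := (hasDerivAt_id t).neg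
      have h2 := (hφ y (-t)).scomp t h1
      have h3 : (-1 : ℝ) • (-(gradient f (φ (-t) y))) = -(gradient f' (ψ t y)) := by
        rw [hgrad']
        simp
        rfl
    -- h2 : HasDerivAt (fun s => φ (-s) y) _ t
      rw [h3] at h2
      exact h2
    have hψgrp : ∀ s t : ℝ, ∀ y : E, ψ t (ψ s y) = ψ (t + s) y := by
      intro s t y
      show φ (-t) (φ (-s) y) = φ (-(t + s)) y
      rw [hgrp]
      ring_nf
    have hψcont : ∀ t : ℝ, Continuous (ψ t) := fun t => hcont (-t)
    have hψinv : ∀ y ∈ M, ∀ t : ℝ, ψ t y ∈ M := fun y hy t => hinv y hy (-t)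
    have hfin' : {y ∈ M | gradient f' y = 0}.Finite := by
      have : {y ∈ M | gradient f' y = 0} = CM := by
        ext y
        simp [hgrad', hCMdef]
      rw [this]
      exact hfin
    obtain ⟨a, ha⟩ := aux_omega hf.neg hM hψ0 hψ hψgrp hψcont hψinv hfin' hx
    have ha2 : Tendsto (fun t => φ t x) atBot (𝓝 a) := by
      have h1 := ha.comp tendsto_neg_atBot_atTop
      have h2 : ((fun t => ψ t x) ∘ fun t : ℝ => -t) = fun t => φ t x := by
        funext t
        show φ (-(-t)) x = φ t x
        rw [neg_neg]
      rwa [h2] at h1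
    have ha3 := aux_limit_fixed hψ0 hψ hψgrp hψcont hshiftT ha
    have haM : a ∈ M := hM.isClosed.mem_of_tendsto ha
      (Eventually.of_forall fun t => hψinv x hx t)
    have hacrit : gradient f a = 0 := by
      have := ha3.2
      rw [hgrad'] at this
      simpa using this
    exact ⟨a, ⟨haM, hacrit⟩, ha2⟩
  obtain ⟨ε₀, hε₀, hsep⟩ := aux_sep hfin
  -- the relations
  set Rel : E → E → Prop := fun a b => ∃ x ∈ M, Tendsto (fun t => φ t x) atBot (𝓝 a) ∧
    Tendsto (fun t => φ t x) atTop (𝓝 b) with hReldef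
  set SRel : E → E → Prop := fun a b => Rel a b ∨ Rel b a with hSReldef
  set Eqv : E → E → Prop := Relation.ReflTransGen SRel with hEqvdef
  have hEqvrefl : ∀ a, Eqv a a := fun a => Relation.ReflTransGen.refl
  have hEqvsymm : ∀ a b, Eqv a b → Eqv b a :=
    fun a b h => (@Relation.ReflTransGen.stdSymm _ SRel ⟨fun u v huv => Or.symm huv⟩).symm _ _ h
  have hEqvtrans : ∀ a b c, Eqv a b → Eqv b c → Eqv a c :=
    fun a b c h1 h2 => Relation.ReflTransGen.trans h1 h2
  have hshift : ∀ (x : E) (s : ℝ) (a : E), Tendsto (fun t => φ t x) atTop (𝓝 a) →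
      Tendsto (fun t => φ t (φ s x)) atTop (𝓝 a) := by
    intro x s a h
    have h2 : (fun t => φ t (φ s x)) = fun t => φ (t + s) x := funext fun t => hgrp s t x
    rw [h2]
    exact h.comp (hshiftT s)
  have homegaC : ∀ c ∈ CM, ω c = c := by
    intro c hc
    exact tendsto_nhds_unique ((hω c hc.1).2) (hfixtend c hc)
  -- the key induction
  have keyC : ∀ N : ℕ, ∀ c ∈ CM, (CM ∩ {c' | f c' < f c}).ncard = N →
      ∀ x ∈ M, Tendsto (fun t => φ t x) atTop (𝓝 c) →
      ∀ xs : ℕ → E, (∀ k, xs k ∈ M) → Tendsto xs atTop (𝓝 x) →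
      ∃ k, Eqv (ω (xs k)) c := by
    intro N
    induction N using Nat.strong_induction_on with
    | _ N IH =>
    intro c hcCM hN x hxM hxc xs hxsM hxs
    by_contra hcon
    push_neg at hcon
    have hωne : ∀ k, ω (xs k) ≠ c := by
      intro k h
      exact hcon k (h ▸ hEqvrefl c)
    -- construct an exit packet for each k
    have pack : ∀ k : ℕ, ∃ (nk : ℕ) (e v : ℝ), e ≤ v ∧
        dist (φ e (xs nk)) c < 1/(k+1) ∧
        dist (φ v (xs nk)) c = ε₀ ∧
        (∀ t, e ≤ t → t ≤ v → dist (φ t (xs nk)) c ≤ ε₀) ∧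
        ε₀ ≤ (1/(k+1)) * Real.exp (L * (v - e)) := by
      intro k
      have hmpos : (0:ℝ) < (min ((1:ℝ)/((k:ℝ)+1)) ε₀)/2 := by
        have h1 : (0:ℝ) < (1:ℝ)/((k:ℝ)+1) := by positivity
        have := lt_min h1 hε₀
        linarith
      obtain ⟨T, hT1⟩ := (Metric.tendsto_nhds.mp hxc _ hmpos).exists
      have h2 : Tendsto (fun n => φ T (xs n)) atTop (𝓝 (φ T x)) := ((hcont T).tendsto _).comp hxs
      obtain ⟨nk, hnk⟩ := (Metric.tendsto_nhds.mp h2 _ hmpos).exists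
      set y := xs nk with hy
      have hyM : y ∈ M := hxsM nk
      have hey : dist (φ T y) c < min ((1:ℝ)/((k:ℝ)+1)) ε₀ := by
        have := dist_triangle (φ T y) (φ T x) c
        linarith
      have hc'' : ω y ∈ M ∧ gradient f (ω y) = 0 := (hω y hyM).1
      have hc''CM : ω y ∈ CM := hc''
      have hc''t : Tendsto (fun t => φ t y) atTop (𝓝 (ω y)) := (hω y hyM).2
      have hd : 2 * ε₀ < dist (ω y) c := hsep _ hc''CM _ hcCM (hωne nk)
      set S := {t : ℝ | T ≤ t ∧ ε₀ ≤ dist (φ t y) c} with hSdef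
      have hSne : S.Nonempty := by
        have hev : ∀ᶠ t in atTop, dist (φ t y) (ω y) < ε₀ := Metric.tendsto_nhds.mp hc''t _ hε₀
        obtain ⟨t, ht1, ht2⟩ := (hev.and (eventually_ge_atTop T)).exists
        refine ⟨t, ht2, ?_⟩
        have h3 : dist (ω y) c ≤ dist (φ t y) (ω y) + dist (φ t y) c := dist_triangle_left _ _ _
        linarith
      have hycont : Continuous fun t => φ t y :=
        continuous_iff_continuousAt.mpr (fun t => (hφ y t).continuousAt)
      have hScl : IsClosed S := by
        apply IsClosed.inter
        · exact isClosed_le continuous_const continuous_id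
        · exact isClosed_le continuous_const ((hycont.dist continuous_const))
      have hSbd : BddBelow S := ⟨T, fun t ht => ht.1⟩
      set v := sInf S with hvdef
      have hvS : v ∈ S := hScl.csInf_mem hSne hSbd
      have hTv : T ≤ v := hvS.1
      have hbelow : ∀ t, T ≤ t → t < v → dist (φ t y) c < ε₀ := by
        intro t ht1 ht2
        by_contra h
        exact absurd (csInf_le hSbd ⟨ht1, not_lt.mp h⟩) (not_le.mpr ht2)
      have heyε : dist (φ T y) c < ε₀ := lt_of_lt_of_le hey (min_le_right _ _)
      have hTltv : T < v := by
        rcases lt_or_eq_of_le hTv with h | h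
        · exact h
        · exfalso
          rw [← h] at hvS
          exact absurd hvS.2 (not_le.mpr heyε)
      have hveq : dist (φ v y) c = ε₀ := by
        refine le_antisymm ?_ hvS.2
        by_contra h
        push_neg at h
        have hDcont : Tendsto (fun t => dist (φ t y) c) (𝓝[<] v) (𝓝 (dist (φ v y) c)) :=
          ((hycont.dist continuous_const).tendsto v).mono_left nhdsWithin_le_nhds
        have hev1 : ∀ᶠ s in 𝓝[<] v, ε₀ < dist (φ s y) c := hDcont.eventually_const_lt h
        have hev2 : ∀ᶠ s in 𝓝[<] v, s ∈ Set.Ioo T v :=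
          Ioo_mem_nhdsLT_of_mem ⟨hTltv, le_refl _⟩
        obtain ⟨s, hs1, hs2⟩ := (hev1.and hev2).exists
        exact absurd (hbelow s (le_of_lt hs2.1) hs2.2) (not_lt.mpr (le_of_lt hs1))
      have hgb := hgron y hyM c hcCM T v hTv
      have hk : ε₀ ≤ (1/(k+1)) * Real.exp (L * (v - T)) := by
        have h2 : dist (φ T y) c < 1/(k+1) := lt_of_lt_of_le hey (min_le_left _ _)
        have h3 : (0:ℝ) < Real.exp (L * (v - T)) := Real.exp_pos _
        have h4 : dist (φ v y) c ≤ dist (φ T y) c * Real.exp (L * (v - T)) := by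
          rw [dist_eq_norm, dist_eq_norm]
          exact hgb
        rw [hveq] at h4
        calc ε₀ ≤ dist (φ T y) c * Real.exp (L * (v - T)) := h4
          _ ≤ (1/(k+1)) * Real.exp (L * (v - T)) :=
            mul_le_mul_of_nonneg_right (le_of_lt h2) (le_of_lt h3)
      have hin : ∀ t, T ≤ t → t ≤ v → dist (φ t y) c ≤ ε₀ := by
        intro t ht1 ht2
        rcases lt_or_eq_of_le ht2 with h | h
        · exact le_of_lt (hbelow t ht1 h)
        · rw [h, hveq]
      exact ⟨nk, T, v, hTv, lt_of_lt_of_le hey (min_le_left _ _), hveq, hin, hk⟩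
    choose nk ek vk hev hpk1 hpk2 hpk3 hpk4 using pack
    set w : ℕ → E := fun k => φ (vk k) (xs (nk k)) with hwdef
    have hwM : ∀ k, w k ∈ M := fun k => hinv _ (hxsM _) _
    obtain ⟨z, hzM, g, hgmono, hgz⟩ := hM.tendsto_subseq hwM
    have hdiv : Tendsto (fun k => vk k - ek k) atTop atTop := by
      have hlow : ∀ k : ℕ, Real.log (ε₀ * (k+1)) / L ≤ vk k - ek k := by
        intro k
        have hk1 : (0:ℝ) < (k:ℝ)+1 := by positivity
        have h1 : ε₀ * ((k:ℝ)+1) ≤ Real.exp (L * (vk k - ek k)) := by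
          have := hpk4 k
          rw [div_mul_eq_mul_div, one_mul, le_div_iff₀ hk1] at this
          linarith [this]
        have h2 : Real.log (ε₀ * ((k:ℝ)+1)) ≤ L * (vk k - ek k) := by
          have := Real.log_le_log (by positivity) h1
          rwa [Real.log_exp] at this
        rw [div_le_iff₀ hLpos]
        linarith [h2]
      apply tendsto_atTop_mono hlow
      apply Tendsto.atTop_div_const hLpos
      apply Real.tendsto_log_atTop.comp
      apply Tendsto.const_mul_atTop hε₀
      exact tendsto_atTop_add_const_right _ 1 tendsto_natCast_atTop_atTop
    have hz_back : ∀ t : ℝ, 0 ≤ t → dist (φ (-t) z) c ≤ ε₀ := by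
      intro t ht
      have h1 : Tendsto (fun j => φ (-t) (w (g j))) atTop (𝓝 (φ (-t) z)) :=
        ((hcont (-t)).tendsto z).comp hgz
      have h3 : ∀ᶠ j in atTop, t ≤ vk (g j) - ek (g j) :=
        (hdiv.comp hgmono.tendsto_atTop).eventually_ge_atTop t
      have h2 : ∀ᶠ j in atTop, dist (φ (-t) (w (g j))) c ≤ ε₀ := by
        refine h3.mono fun j hj => ?_
        have heq : φ (-t) (w (g j)) = φ (vk (g j) - t) (xs (nk (g j))) := by
          show φ (-t) (φ (vk (g j)) _) = _
          rw [hgrp]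
          ring_nf
        rw [heq]
        exact hpk3 (g j) _ (by linarith [hev (g j)]) (by linarith)
      exact le_of_tendsto (h1.dist tendsto_const_nhds) h2
    obtain ⟨a, haCM, haz⟩ := halpha z hzM
    have ha_c : a = c := by
      have h1 : Tendsto (fun t : ℝ => φ (-t) z) atTop (𝓝 a) := haz.comp tendsto_neg_atTop_atBot
      have h2 : dist a c ≤ ε₀ := by
        apply le_of_tendsto (h1.dist tendsto_const_nhds)
        filter_upwards [eventually_ge_atTop (0:ℝ)] with t ht
        exact hz_back t ht
      by_contra hne
      have hsepac := hsep a ⟨haCM.1, haCM.2⟩ c hcCM hne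
      linarith
    have hzd : dist z c = ε₀ := by
      have h1 : Tendsto (fun j => dist (w (g j)) c) atTop (𝓝 (dist z c)) :=
        hgz.dist tendsto_const_nhds
      have h2 : Tendsto (fun j => dist (w (g j)) c) atTop (𝓝 ε₀) := by
        have : (fun j => dist (w (g j)) c) = fun _ => ε₀ := funext fun j => hpk2 (g j)
        rw [this]
        exact tendsto_const_nhds
      exact tendsto_nhds_unique h1 h2
    have hzncrit : gradient f z ≠ 0 := by
      intro h
      have hzCM : z ∈ CM := ⟨hzM, h⟩
      have hne : z ≠ c := by
        intro h'
        rw [h'] at hzd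
        simp at hzd
        linarith
      have := hsep z hzCM c hcCM hne
      linarith [hzd]
    have hzω : (ω z ∈ M ∧ gradient f (ω z) = 0) ∧
        Tendsto (fun t => φ t z) atTop (𝓝 (ω z)) := hω z hzM
    have hfzc : f z ≤ f c := by
      have h1 : ∀ j, f (w (g j)) ≤ f (φ (ek (g j)) (xs (nk (g j)))) :=
        fun j => aux_anti hf hφ (xs (nk (g j))) (hev (g j))
      have h2 : Tendsto (fun j => φ (ek (g j)) (xs (nk (g j)))) atTop (𝓝 c) := by
        rw [tendsto_iff_dist_tendsto_zero]
        apply squeeze_zero (fun _ => dist_nonneg) (fun j => le_of_lt (hpk1 (g j)))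
        exact tendsto_one_div_add_atTop_nhds_zero_nat.comp hgmono.tendsto_atTop
      have h3 : Tendsto (fun j => f (w (g j))) atTop (𝓝 (f z)) :=
        (hf.continuous.tendsto z).comp hgz
      have h4 : Tendsto (fun j => f (φ (ek (g j)) (xs (nk (g j))))) atTop (𝓝 (f c)) :=
        (hf.continuous.tendsto c).comp h2
      exact le_of_tendsto_of_tendsto h3 h4 (Eventually.of_forall h1)
    have hc2lt : f (ω z) < f c := by
      have h1 : f (φ 1 z) < f z := aux_strict hf hφ0 hφ hzncrit
      have h2 : f (ω z) ≤ f (φ 1 z) := by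
        apply le_of_tendsto ((hf.continuous.tendsto _).comp hzω.2)
        filter_upwards [eventually_ge_atTop (1:ℝ)] with t ht
        exact aux_anti hf hφ z ht
      linarith
    have hcc2 : Eqv c (ω z) :=
      Relation.ReflTransGen.single (Or.inl ⟨z, hzM, ha_c ▸ haz, hzω.2⟩)
    have hωzCM : ω z ∈ CM := hzω.1
    have hsub : (CM ∩ {c' | f c' < f (ω z)}).ncard < N := by
      rw [← hN]
      have hsubset : CM ∩ {c' | f c' < f (ω z)} ⊆ CM ∩ {c' | f c' < f c} := by
        rintro c' ⟨h1, h2⟩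
        exact ⟨h1, lt_trans h2 hc2lt⟩
      have hss : CM ∩ {c' | f c' < f (ω z)} ⊂ CM ∩ {c' | f c' < f c} := by
        rw [Set.ssubset_iff_of_subset hsubset]
        refine ⟨ω z, ⟨hωzCM, hc2lt⟩, ?_⟩
        intro hmem
        have h5 : f (ω z) < f (ω z) := hmem.2
        exact lt_irrefl _ h5
      exact Set.ncard_lt_ncard hss (hfin.inter_of_left _)
    obtain ⟨j, hj⟩ := IH _ hsub (ω z) hωzCM rfl z hzM hzω.2
      (fun j => w (g j)) (fun j => hwM (g j)) hgz
    have hωw : ω (w (g j)) = ω (xs (nk (g j))) := by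
      have h1 := (hω _ (hwM (g j))).2
      have h2 := hshift (xs (nk (g j))) (vk (g j)) _ ((hω _ (hxsM (nk (g j)))).2)
      exact tendsto_nhds_unique h1 h2
    rw [hωw] at hj
    exact hcon (nk (g j)) (hEqvtrans _ _ _ hj (hEqvsymm _ _ hcc2))
  -- classes are closed
  have hclosed : ∀ c ∈ CM, IsClosed {x | x ∈ M ∧ Eqv (ω x) c} := by
    intro c hc
    apply IsSeqClosed.isClosed
    intro xs x hxs hlim
    have hxM : x ∈ M := hM.isClosed.mem_of_tendsto hlim (Eventually.of_forall fun n => (hxs n).1)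
    have hωx := hω x hxM
    obtain ⟨k, hk⟩ := keyC _ (ω x) hωx.1 rfl x hxM hωx.2 xs (fun n => (hxs n).1) hlim
    exact ⟨hxM, hEqvtrans _ _ _ (hEqvsymm _ _ hk) (hxs k).2⟩
  have hpCM : p ∈ CM := ⟨hp, hpcrit⟩
  have hqCM : q ∈ CM := ⟨hq, hqcrit⟩
  -- connectedness argument
  have hEqvpq : Eqv p q := by
    by_contra hpq
    set F1 := {x | x ∈ M ∧ Eqv (ω x) p} with hF1def
    set F2 := ⋃ c ∈ {c' ∈ CM | ¬ Eqv c' p}, {x | x ∈ M ∧ Eqv (ω x) c} with hF2def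
    have hF1c : IsClosed F1 := hclosed p hpCM
    have hF2c : IsClosed F2 :=
      Set.Finite.isClosed_biUnion (hfin.subset (fun c hc => hc.1)) (fun c hc => hclosed c hc.1)
    have hcomp1 : IsCompact F1 := hM.of_isClosed_subset hF1c (fun x hx => hx.1)
    have hcomp2 : IsCompact F2 := by
      apply hM.of_isClosed_subset hF2c
      rintro x hx
      simp only [hF2def, Set.mem_iUnion] at hx
      obtain ⟨c, _, hxM, _⟩ := hx
      exact hxM
    have hdisj : Disjoint F1 F2 := by
      rw [Set.disjoint_left]
      rintro x ⟨hxM, hxp⟩ hx2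
      simp only [hF2def, Set.mem_iUnion] at hx2
      obtain ⟨c, ⟨hcCM, hcp⟩, -, hxc⟩ := hx2
      exact hcp (hEqvtrans _ _ _ (hEqvsymm _ _ hxc) hxp)
    obtain ⟨U, V, hUo, hVo, hF1U, hF2V, hUV⟩ :=
      SeparatedNhds.of_isCompact_isCompact hcomp1 hcomp2 hdisj
    have hcover : M ⊆ U ∪ V := by
      intro x hxM
      have hωx := hω x hxM
      by_cases hcase : Eqv (ω x) p
      · exact Or.inl (hF1U ⟨hxM, hcase⟩)
      · refine Or.inr (hF2V ?_)
        exact Set.mem_biUnion (show ω x ∈ {c' ∈ CM | ¬ Eqv c' p} from ⟨hωx.1, hcase⟩)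
          (show x ∈ {x | x ∈ M ∧ Eqv (ω x) (ω x)} from ⟨hxM, hEqvrefl _⟩)
    have hpU : p ∈ U := hF1U ⟨hp, by rw [homegaC p hpCM]⟩
    have hqV : q ∈ V := by
      apply hF2V
      have hqq : Eqv (ω q) q := by rw [homegaC q hqCM]
      exact Set.mem_biUnion
        (show q ∈ {c' ∈ CM | ¬ Eqv c' p} from ⟨hqCM, fun h => hpq (hEqvsymm _ _ h)⟩)
        (show q ∈ {x | x ∈ M ∧ Eqv (ω x) q} from ⟨hq, hqq⟩)
    obtain ⟨s, -, hsU, hsV⟩ :=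
      hMconn.isPreconnected U V hUo hVo hcover ⟨p, hp, hpU⟩ ⟨q, hq, hqV⟩
    exact Set.disjoint_left.mp hUV hsU hsV
  -- endpoints of flow lines are critical points in M
  have hRelCM : ∀ a b : E, Rel a b →
      (a ∈ M ∧ gradient f a = 0) ∧ (b ∈ M ∧ gradient f b = 0) := by
    rintro a b ⟨x0, hx0M, hxa, hxb⟩
    have haM : a ∈ M := hM.isClosed.mem_of_tendsto hxa
      (Eventually.of_forall fun t => hinv _ hx0M t)
    have hbM : b ∈ M := hM.isClosed.mem_of_tendsto hxb
      (Eventually.of_forall fun t => hinv _ hx0M t)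
    have ha := aux_limit_fixed hφ0 hφ hgrp hcont hshiftB hxa
    have hb := aux_limit_fixed hφ0 hφ hgrp hcont hshiftT hxb
    exact ⟨⟨haM, ha.2⟩, ⟨hbM, hb.2⟩⟩
  have hSRelCM : ∀ a b : E, SRel a b →
      (a ∈ M ∧ gradient f a = 0) ∧ (b ∈ M ∧ gradient f b = 0) := by
    rintro a b (h | h)
    · exact hRelCM a b h
    · exact ⟨(hRelCM b a h).2, (hRelCM b a h).1⟩
  -- build the chain
  have hchain : ∀ b : E, Eqv p b → ∃ n : ℕ, ∃ cc : Fin (n+1) → E,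
      cc 0 = p ∧ cc (Fin.last n) = b ∧ (∀ i, cc i ∈ M ∧ gradient f (cc i) = 0) ∧
      ∀ i : Fin n, SRel (cc i.castSucc) (cc i.succ) := by
    intro b hb
    induction hb with
    | refl => exact ⟨0, fun _ => p, rfl, rfl, fun _ => ⟨hp, hpcrit⟩, fun i => i.elim0⟩
    | @tail b' b'' hab hlast IH2 =>
      obtain ⟨n, cc, h0, hlastc, hmem, hstep⟩ := IH2
      refine ⟨n+1, (Fin.snoc cc b'' : Fin (n+2) → E), ?_, ?_, ?_, ?_⟩
      · have h00 : (Fin.snoc cc b'' : Fin (n+2) → E) (Fin.castSucc 0) = cc 0 :=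
          Fin.snoc_castSucc _ _ _
        exact h00.trans h0
      · exact Fin.snoc_last _ _
      · intro i
        induction i using Fin.lastCases with
        | last =>
          rw [Fin.snoc_last]
          exact (hSRelCM _ _ hlast).2
        | cast i =>
          rw [Fin.snoc_castSucc]
          exact hmem i
      · intro i
        induction i using Fin.lastCases with
        | last =>
          have e1 : (Fin.last n).castSucc = Fin.castSucc (Fin.last n) := rfl
          have e2 : (Fin.last n).succ = Fin.last (n+1) := Fin.succ_last n
          rw [e2, Fin.snoc_last, Fin.snoc_castSucc, hlastc]
          exact hlast
        | cast i =>
          have e1 : (Fin.castSucc i).castSucc = Fin.castSucc (Fin.castSucc i) := rfl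
          have e2 : (Fin.castSucc i).succ = Fin.castSucc i.succ := (Fin.succ_castSucc i)
          rw [e2, Fin.snoc_castSucc, Fin.snoc_castSucc]
          exact hstep i
  obtain ⟨n, cc, h0, hl, hmem, hstep⟩ := hchain q hEqvpq
  exact ⟨n, cc, h0, hl, hmem, fun i => hstep i⟩
end
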